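/- arXiv:1707.04850 — 8 statements merged into one kernel-verified Lean document; each statement's English description precedes it below -/
import Mathlib

section
/- Let K1, K2, K3 be positive real numbers and let {ξ_n}_{n≥0} be a real-valued process adapted to a filtration {𝓕_n}_{n≥0} on a probability space, with ξ_0 a deterministic real constant and |ξ_{n+1} − ξ_n| ≤ K3 almost surely for all n. Let T0 ∈ ℝ and define the stopping time τ0 = inf{n ∈ ℕ : ξ_n ≥ T0}. Assume that almost surely, for every n: E(ξ_{n+1} | 𝓕_n) ≥ ξ_n + K1 on the event {n < τ0}, and E(ξ_{n+1} | 𝓕_n) ≥ ξ_n + K2 on the event {n ≥ τ0}. Let T ∈ ℝ with T ≥ T0 and define τ = inf{n ∈ ℕ : ξ_n ≥ T}. Then E(τ − τ0) ≤ (|T0 − T| + 3·K3)/K2. -/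
/-!
Let `σ` and `ρ` be the hitting times of `[T0, ∞)` and `[T, ∞)` and `A n = {σ ≤ n < ρ}`, an
`𝓕 n`-event. Then `ρ - σ = ∑ n, 𝟙_{A n}`, so `E(ρ - σ) = ∑ n, P(A n)`. On `A n` the drift is at
least `K2`, hence `K2 ∑_{n<N} P(A n) ≤ E ∑_{n<N} 𝟙_{A n} (ξ (n+1) - ξ n)`. Pathwise this sum
telescopes to `ξ (min ρ N) - ξ σ ≤ (T + K3) - T0`: the process stays below `T` before `ρ`, and one
step overshoots by at most `K3`.
-/

open MeasureTheory Filter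
open scoped ENNReal

lemma ENat.encard_setOf_le_lt (a b : ℕ∞) :
    {n : ℕ | a ≤ n ∧ (n : ℕ∞) < b}.encard = b - a := by
  induction a using ENat.recTopCoe with
  | top => simp
  | coe i =>
    induction b using ENat.recTopCoe with
    | top =>
      have hIci : {n : ℕ | (i : ℕ∞) ≤ n ∧ (n : ℕ∞) < ⊤} = Set.Ici i := by ext; simp
      rw [hIci, Set.encard_eq_top (Set.Ici_infinite i), ENat.top_sub_natCast]
    | coe j =>
      have hIco : {n : ℕ | (i : ℕ∞) ≤ n ∧ (n : ℕ∞) < j} = (Finset.Ico i j : Set ℕ) := by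
        ext; simp
      rw [hIco, Set.encard_coe_eq_coe_finsetCard, Nat.card_Ico, ENat.natCast_sub]

lemma ENat.toENNReal_sub_eq_tsum_indicator (a b : ℕ∞) :
    (b - a : ℝ≥0∞) = ∑' n : ℕ, {n : ℕ | a ≤ n ∧ (n : ℕ∞) < b}.indicator (fun _ => 1) n := by
  rw [← _root_.tsum_subtype, ENNReal.tsum_set_one, ENat.encard_setOf_le_lt, ENat.toENNReal_sub]

lemma lintegral_sub_eq_tsum_measure {Ω : Type*} [MeasurableSpace Ω] (μ : Measure Ω)
    {σ ρ : Ω → ℕ∞} (hσ : ∀ n : ℕ, MeasurableSet {ω | σ ω ≤ n})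
    (hρ : ∀ n : ℕ, MeasurableSet {ω | ρ ω ≤ n}) :
    ∫⁻ ω, (ρ ω - σ ω : ℝ≥0∞) ∂μ = ∑' n : ℕ, μ {ω | σ ω ≤ n ∧ (n : ℕ∞) < ρ ω} := by
  have hA (n : ℕ) : MeasurableSet {ω | σ ω ≤ n ∧ (n : ℕ∞) < ρ ω} := by
    simpa only [Set.ofPred_and, Set.compl_ofPred, not_le] using (hσ n).inter (hρ n).compl
  calc ∫⁻ ω, (ρ ω - σ ω : ℝ≥0∞) ∂μ
      = ∫⁻ ω, ∑' n : ℕ, {ω | σ ω ≤ n ∧ (n : ℕ∞) < ρ ω}.indicator (fun _ => 1) ω ∂μ := by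
        refine lintegral_congr fun ω => ?_
        rw [ENat.toENNReal_sub_eq_tsum_indicator]
        simp only [Set.indicator_apply, Set.mem_ofPred_eq]
    _ = ∑' n : ℕ, μ {ω | σ ω ≤ n ∧ (n : ℕ∞) < ρ ω} := by
        rw [lintegral_tsum fun n => (measurable_const.indicator (hA n)).aemeasurable]
        exact tsum_congr fun n => lintegral_indicator_one (hA n)

section HittingTime

variable {Ω β : Type*}

lemma hittingAfter_bot_eq_iInf (u : ℕ → Ω → β) (s : Set β) (ω : Ω) :
    (hittingAfter u s ⊥ ω : ℕ∞) = ⨅ (n : ℕ) (_ : u n ω ∈ s), (n : ℕ∞) := by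
  refine le_antisymm (le_iInf₂ fun n hn => hittingAfter_le_of_mem bot_le hn) ?_
  by_cases h : hittingAfter u s ⊥ ω = ⊤
  · exact h ▸ le_top
  · have hmem := hittingAfter_mem_set_of_ne_top h
    lift hittingAfter u s ⊥ ω to ℕ using h with i
    exact iInf₂_le i hmem

lemma toENNReal_hittingAfter_bot (u : ℕ → Ω → β) (s : Set β) (ω : Ω) :
    ENat.toENNReal (hittingAfter u s ⊥ ω) = ⨅ (n : ℕ) (_ : u n ω ∈ s), (n : ℝ≥0∞) := by
  rw [hittingAfter_bot_eq_iInf]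
  simp

lemma mem_of_hittingAfter_eq_natCast {u : ℕ → Ω → β} {s : Set β} {n i : ℕ} {ω : Ω}
    (h : hittingAfter u s n ω = (i : ℕ∞)) : u i ω ∈ s := by
  have hmem := hittingAfter_mem_set_of_ne_top (h ▸ ENat.natCast_ne_top i)
  rwa [h] at hmem

end HittingTime

section Telescoping

variable {f : ℕ → ℝ} {L L' K : ℝ}

lemma sum_Ico_sub_le_of_le_of_forall_lt {i j : ℕ} (hLL' : L ≤ L') (hK : 0 ≤ K)
    (hinc : ∀ n, f (n + 1) - f n ≤ K) (hi : L ≤ f i) (hj : ∀ k < j, f k < L') :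
    ∑ n ∈ Finset.Ico i j, (f (n + 1) - f n) ≤ L' - L + K := by
  rcases le_or_gt j i with hji | hij
  · rw [Finset.Ico_eq_empty_of_le hji, Finset.sum_empty]
    linarith
  · obtain ⟨k, rfl⟩ := Nat.exists_eq_add_one_of_ne_zero (Nat.ne_zero_of_lt hij)
    rw [Finset.sum_Ico_sub f hij.le]
    linarith [hinc k, hj k k.lt_add_one]

lemma sum_range_ite_sub_le {a b : ℕ∞} (hLL' : L ≤ L') (hK : 0 ≤ K)
    (hinc : ∀ n, f (n + 1) - f n ≤ K) (ha : ∀ i : ℕ, a = i → L ≤ f i)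
    (hb : ∀ k : ℕ, (k : ℕ∞) < b → f k < L') (N : ℕ) :
    ∑ n ∈ Finset.range N, (if a ≤ n ∧ (n : ℕ∞) < b then f (n + 1) - f n else 0) ≤ L' - L + K := by
  induction a using ENat.recTopCoe with
  | top =>
    simp only [top_le_iff, ENat.natCast_ne_top, false_and, if_false, Finset.sum_const_zero]
    linarith
  | coe i =>
    obtain ⟨j, hj⟩ : ∃ j : ℕ, (j : ℕ∞) = min b N :=
      ⟨_, ENat.natCast_toNat (ne_top_of_le_ne_top (ENat.natCast_ne_top N) (min_le_right _ _))⟩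
    have hjN : j ≤ N := by exact_mod_cast hj.trans_le (min_le_right _ _)
    have hcond : ∀ n ∈ Finset.range N, ((i : ℕ∞) ≤ n ∧ (n : ℕ∞) < b ↔ n ∈ Finset.Ico i j) := by
      intro n hn
      have hn' : (n : ℕ∞) < N := by exact_mod_cast Finset.mem_range.mp hn
      rw [Finset.mem_Ico, ← Nat.cast_lt (α := ℕ∞), hj, lt_min_iff, Nat.cast_le]
      tauto
    rw [Finset.sum_congr rfl fun n hn => if_congr (hcond n hn) rfl rfl, Finset.sum_ite_mem,
      Finset.inter_eq_right.mpr fun n hn => Finset.mem_range.mpr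
        ((Finset.mem_Ico.mp hn).2.trans_le hjN)]
    refine sum_Ico_sub_le_of_le_of_forall_lt hLL' hK hinc (ha i rfl) fun k hk => hb k ?_
    exact lt_min_iff.mp (hj ▸ (Nat.cast_lt.mpr hk)) |>.1

end Telescoping

section Drift

variable {Ω : Type*} {m0 : MeasurableSpace Ω} {μ : Measure Ω}

lemma integrable_of_abs_sub_le [IsFiniteMeasure μ] {ξ : ℕ → Ω → ℝ}
    (hmeas : ∀ n, AEStronglyMeasurable (ξ n) μ) (h0 : Integrable (ξ 0) μ) {K : ℝ}
    (hbdd : ∀ n, ∀ᵐ ω ∂μ, |ξ (n + 1) ω - ξ n ω| ≤ K) (n : ℕ) : Integrable (ξ n) μ := by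
  induction n with
  | zero => exact h0
  | succ n ih =>
    have hinc : Integrable (ξ (n + 1) - ξ n) μ :=
      .of_bound ((hmeas _).sub (hmeas _)) K <| by
        simpa only [Pi.sub_apply, Real.norm_eq_abs] using hbdd n
    simpa using ih.add hinc

lemma mul_measureReal_le_setIntegral_sub [IsFiniteMeasure μ] {m : MeasurableSpace Ω}
    (hm : m ≤ m0) {f g : Ω → ℝ} {s : Set Ω} {c : ℝ} (hf : Integrable f μ) (hg : Integrable g μ)
    (hs : MeasurableSet[m] s) (hdrift : ∀ᵐ ω ∂μ, ω ∈ s → g ω + c ≤ μ[f|m] ω) :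
    c * μ.real s ≤ ∫ ω in s, (f ω - g ω) ∂μ := by
  have hs₀ : MeasurableSet[m0] s := hm s hs
  calc c * μ.real s = ∫ ω in s, (g ω + c) ∂μ - ∫ ω in s, g ω ∂μ := by
        rw [integral_add hg.integrableOn (integrable_const c).integrableOn, setIntegral_const,
          smul_eq_mul]
        ring
    _ ≤ ∫ ω in s, (μ[f|m]) ω ∂μ - ∫ ω in s, g ω ∂μ := by
        refine sub_le_sub_right (setIntegral_mono_ae_restrict
          (hg.add (integrable_const c)).integrableOn integrable_condExp.integrableOn ?_) _
        rwa [EventuallyLE, ae_restrict_iff' hs₀]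
    _ = ∫ ω in s, (f ω - g ω) ∂μ := by
        rw [setIntegral_condExp hm hf hs, integral_sub hf.integrableOn hg.integrableOn]

lemma tsum_measure_le_of_drift [IsProbabilityMeasure μ] {𝓕 : Filtration ℕ m0}
    {ξ : ℕ → Ω → ℝ} {A : ℕ → Set Ω} {c C : ℝ} (hc : 0 < c) (hint : ∀ n, Integrable (ξ n) μ)
    (hA : ∀ n, MeasurableSet[𝓕 n] (A n))
    (hdrift : ∀ n, ∀ᵐ ω ∂μ, ω ∈ A n → ξ n ω + c ≤ μ[ξ (n + 1)|𝓕 n] ω)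
    (hpath : ∀ᵐ ω ∂μ, ∀ N,
      ∑ n ∈ Finset.range N, (A n).indicator (fun ω => ξ (n + 1) ω - ξ n ω) ω ≤ C) :
    ∑' n, μ (A n) ≤ ENNReal.ofReal (C / c) := by
  have hA₀ (n : ℕ) : MeasurableSet (A n) := 𝓕.le n _ (hA n)
  have hinc (n : ℕ) : Integrable (fun ω => ξ (n + 1) ω - ξ n ω) μ := (hint (n + 1)).sub (hint n)
  refine ENNReal.tsum_le_of_sum_range_le fun N => ?_
  have hsum : c * ∑ n ∈ Finset.range N, μ.real (A n) ≤ C :=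
    calc c * ∑ n ∈ Finset.range N, μ.real (A n)
        ≤ ∑ n ∈ Finset.range N, ∫ ω in A n, (ξ (n + 1) ω - ξ n ω) ∂μ := by
          rw [Finset.mul_sum]
          exact Finset.sum_le_sum fun n _ => mul_measureReal_le_setIntegral_sub (𝓕.le n)
            (hint (n + 1)) (hint n) (hA n) (hdrift n)
      _ = ∫ ω, ∑ n ∈ Finset.range N, (A n).indicator (fun ω => ξ (n + 1) ω - ξ n ω) ω ∂μ := by
          rw [integral_finsetSum _ fun n _ => (hinc n).indicator (hA₀ n)]
          exact Finset.sum_congr rfl fun n _ => (integral_indicator (hA₀ n)).symm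
      _ ≤ ∫ _, C ∂μ :=
          integral_mono_ae (integrable_finsetSum _ fun n _ => (hinc n).indicator (hA₀ n))
            (integrable_const C) (hpath.mono fun ω hω => hω N)
      _ = C := by simp
  calc ∑ n ∈ Finset.range N, μ (A n) = ENNReal.ofReal (∑ n ∈ Finset.range N, μ.real (A n)) := by
        rw [ENNReal.ofReal_sum_of_nonneg fun n _ => measureReal_nonneg]
        exact Finset.sum_congr rfl fun n _ => (ofReal_measureReal (measure_ne_top μ _)).symm
    _ ≤ ENNReal.ofReal (C / c) :=
        ENNReal.ofReal_le_ofReal ((le_div_iff₀' hc).mpr hsum)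

end Drift

theorem expected_ascent_time_bound_general {Ω : Type*} {m : MeasurableSpace Ω}
    (μ : Measure Ω) [IsProbabilityMeasure μ]
    (𝓕 : Filtration ℕ m) (ξ : ℕ → Ω → ℝ) (K1 K2 K3 : ℝ)
    (hK2 : 0 < K2)
    (hadapted : Adapted 𝓕 ξ) (x0 : ℝ) (hx0 : ξ 0 = fun _ => x0)
    (hbdd : ∀ n : ℕ, ∀ᵐ ω ∂μ, |ξ (n + 1) ω - ξ n ω| ≤ K3)
    (T0 T : ℝ) (hT : T0 ≤ T)
    (τ0 : Ω → ℝ≥0∞)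
    (hτ0 : ∀ ω, τ0 ω = ⨅ (n : ℕ) (_ : T0 ≤ ξ n ω), (n : ℝ≥0∞))
    (hdrift : ∀ n : ℕ, ∀ᵐ ω ∂μ,
      ((n : ℝ≥0∞) < τ0 ω → ξ n ω + K1 ≤ (μ[ξ (n + 1) | 𝓕 n]) ω) ∧
      (τ0 ω ≤ (n : ℝ≥0∞) → ξ n ω + K2 ≤ (μ[ξ (n + 1) | 𝓕 n]) ω))
    (τ : Ω → ℝ≥0∞)
    (hτ : ∀ ω, τ ω = ⨅ (n : ℕ) (_ : T ≤ ξ n ω), (n : ℝ≥0∞)) :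
    ∫⁻ ω, (τ ω - τ0 ω) ∂μ ≤ ENNReal.ofReal ((|T0 - T| + 3 * K3) / K2) := by
  set σ : Ω → ℕ∞ := hittingAfter ξ (Set.Ici T0) ⊥
  set ρ : Ω → ℕ∞ := hittingAfter ξ (Set.Ici T) ⊥
  have hσ : IsStoppingTime 𝓕 σ := hadapted.isStoppingTime_hittingAfter measurableSet_Ici
  have hρ : IsStoppingTime 𝓕 ρ := hadapted.isStoppingTime_hittingAfter measurableSet_Ici
  have hτ0σ (ω : Ω) : τ0 ω = ENat.toENNReal (σ ω) :=
    (hτ0 ω).trans (toENNReal_hittingAfter_bot _ _ _).symm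
  have hτρ (ω : Ω) : τ ω = ENat.toENNReal (ρ ω) :=
    (hτ ω).trans (toENNReal_hittingAfter_bot _ _ _).symm
  have hbdd_all := ae_all_iff.mpr hbdd
  have hK3 : 0 ≤ K3 := by
    obtain ⟨ω, hω⟩ := hbdd_all.exists
    exact (abs_nonneg _).trans (hω 0)
  simp only [hτ0σ, hτρ]
  rw [lintegral_sub_eq_tsum_measure μ (fun n => 𝓕.le n _ (hσ.measurableSet_le n))
    (fun n => 𝓕.le n _ (hρ.measurableSet_le n))]
  have hint := integrable_of_abs_sub_le
    (fun n => ((hadapted n).mono (𝓕.le n) le_rfl).aestronglyMeasurable)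
    (hx0 ▸ integrable_const x0) hbdd
  refine (tsum_measure_le_of_drift (A := fun n => {ω | σ ω ≤ n ∧ (n : ℕ∞) < ρ ω})
    (C := T - T0 + K3) hK2 hint
    (fun n => (hσ.measurableSet_le n).inter (hρ.measurableSet_gt n)) (fun n => ?_) ?_).trans ?_
  · filter_upwards [hdrift n] with ω hω hA
    exact hω.2 (by simpa [hτ0σ] using ENat.toENNReal_le.mpr hA.1)
  · filter_upwards [hbdd_all] with ω hω N
    simp only [Set.indicator_apply]
    exact sum_range_ite_sub_le (f := fun n => ξ n ω) hT hK3 (fun n => (abs_le.mp (hω n)).2)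
      (fun i hi => mem_of_hittingAfter_eq_natCast hi)
      (fun k hk => not_le.mp (notMem_of_lt_hittingAfter (u := ξ) (s := Set.Ici T) hk bot_le)) N
  · rw [abs_sub_comm, abs_of_nonneg (sub_nonneg.mpr hT)]
    gcongr
    linarith

/-- bound on the expected time after `τ0` to reach a level `T ≥ T0`,
for a process with drift at least `K1` before `τ0`, drift at least `K2` after `τ0`,
and increments bounded by `K3` (Lemma in the paper). -/
theorem expected_ascent_time_bound {Ω : Type*} {m : MeasurableSpace Ω}
    (μ : Measure Ω) [IsProbabilityMeasure μ]
    (𝓕 : Filtration ℕ m) (ξ : ℕ → Ω → ℝ) (K1 K2 K3 : ℝ)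
    (hK1 : 0 < K1) (hK2 : 0 < K2) (hK3 : 0 < K3)
    (hadapted : Adapted 𝓕 ξ) (x0 : ℝ) (hx0 : ξ 0 = fun _ => x0)
    (hbdd : ∀ n : ℕ, ∀ᵐ ω ∂μ, |ξ (n + 1) ω - ξ n ω| ≤ K3)
    (T0 T : ℝ) (hT : T0 ≤ T)
    (τ0 : Ω → ℝ≥0∞)
    (hτ0 : ∀ ω, τ0 ω = ⨅ (n : ℕ) (_ : T0 ≤ ξ n ω), (n : ℝ≥0∞))
    (hdrift : ∀ n : ℕ, ∀ᵐ ω ∂μ,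
      ((n : ℝ≥0∞) < τ0 ω → ξ n ω + K1 ≤ (μ[ξ (n + 1) | 𝓕 n]) ω) ∧
      (τ0 ω ≤ (n : ℝ≥0∞) → ξ n ω + K2 ≤ (μ[ξ (n + 1) | 𝓕 n]) ω))
    (τ : Ω → ℝ≥0∞)
    (hτ : ∀ ω, τ ω = ⨅ (n : ℕ) (_ : T ≤ ξ n ω), (n : ℝ≥0∞)) :
    ∫⁻ ω, (τ ω - τ0 ω) ∂μ ≤ ENNReal.ofReal ((|T0 - T| + 3 * K3) / K2) :=
  expected_ascent_time_bound_general μ 𝓕 ξ K1 K2 K3 hK2 hadapted x0 hx0 hbdd T0 T hT τ0 hτ0 hdrift τ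
    hτ
end

section
/- Let B, B*, C be positive real constants and let C2, q1 be real constants. Let {ρ'_L}_{L>0} be a family of positive real numbers (indexed by real L > 0) with ρ'_L → 0 and ρ'_L·√L → ∞ as L → ∞. For L > 1 define p_{0,L} = 1 − 1/L, Z_{0,L} = ln(p_{0,L}/(1 − p_{0,L})) = ln(L−1), A_L = Z_{0,L}/2, and ε_L = exp( (B/p_{0,L})·[ −L·ρ'_L/C + (1/C − p_{0,L}/B + 3(1 − p_{0,L})/(2B*))·Z_{0,L} + q1 ] ). Let {p_{1,L}} be a family of real numbers with 0 ≤ p_{1,L} ≤ (exp(−Z_{0,L}) − ε_L·exp(−C2)) / (exp(−A_L) − ε_L·exp(−C2)) for all sufficiently large L, and let {w_L} be a family of real numbers satisfying, for all sufficiently large L, p_{0,L}·(1 − p_{1,L})·w_L = −p_{0,L}·ln(ε_L)/B + ln(exp(L(C − ρ'_L)) − 1)/C + [1/C − p_{0,L}/B + (1 − p_{0,L})/B*]·Z_{0,L} + (1 − p_{0,L})·|A_L|/B* + q1. Then liminf_{L→∞} (−ln ε_L)/(L·ρ'_L) ≥ B/C, and w_L ≤ L + 3√L for all sufficiently large L.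 -/
/-!
Write `x_L = L ρ'_L`. Since `ρ'_L √L → ∞`, `log L = o(√L) = o(x_L)`, and by construction
`-log ε_L = (B / p_{0,L}) (x_L / C - O(log L))`, so `-log ε_L / x_L → B / C`. In particular
`-log ε_L - A_L → ∞`, i.e. `ε_L e^{-C2}` is eventually below `e^{-A_L} / 2 = 1 / (2 √(L - 1))`,
which bounds `p_{1,L}` by `2 / √(L - 1)`. The choice of `ε_L` makes the equation for `w_L` collapse to
`p_{0,L} (1 - p_{1,L}) w_L = x_L / C + log (e^{L (C - ρ'_L)} - 1) / C ≤ L`, and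
`p_{0,L} (1 - p_{1,L}) ≥ 1 - O(1 / √L)` gives `w_L ≤ L + 3 √L`.
-/

open Filter Asymptotics Real
open scoped Topology

lemma isLittleO_log_sqrt : log =o[atTop] (√·) := by
  simpa only [sqrt_eq_rpow] using isLittleO_log_rpow_atTop (one_half_pos (α := ℝ))

section
variable {ρ : ℝ → ℝ}

lemma isLittleO_sqrt_mul_of_tendsto_mul_sqrt (h : Tendsto (fun L => ρ L * √L) atTop atTop) :
    (√·) =o[atTop] fun L => L * ρ L := by
  have h1 : (fun _ => (1 : ℝ)) =o[atTop] fun L => ρ L * √L :=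
    (isLittleO_one_left_iff ℝ).2 (tendsto_abs_atTop_atTop.comp h)
  refine ((isBigO_refl (√·) atTop).mul_isLittleO h1).congr' (by simp) ?_
  filter_upwards [eventually_ge_atTop 0] with L hL
  linear_combination ρ L * mul_self_sqrt hL

lemma tendsto_mul_atTop_of_tendsto_mul_sqrt (h : Tendsto (fun L => ρ L * √L) atTop atTop) :
    Tendsto (fun L => L * ρ L) atTop atTop := by
  refine (tendsto_sqrt_atTop.atTop_mul_atTop₀ h).congr' ?_
  filter_upwards [eventually_ge_atTop 0] with L hL
  linear_combination ρ L * mul_self_sqrt hL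

end

lemma isBigO_log_sub_one_log : (fun L => log (L - 1)) =O[atTop] log := by
  refine IsBigO.of_bound' ?_
  filter_upwards [eventually_ge_atTop 2] with L hL
  rw [norm_of_nonneg (log_nonneg (by linarith)), norm_of_nonneg (log_nonneg (by linarith))]
  exact log_le_log (by linarith) (by linarith)

lemma log_odds_one_sub_inv {L : ℝ} (hL : 1 < L) :
    log ((1 - 1 / L) / (1 - (1 - 1 / L))) = log (L - 1) := by
  congr 1
  field_simp
  ring

lemma isLittleO_mul_add_const {α : Type*} {l : Filter α} {c z x : α → ℝ} {c₀ q : ℝ}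
    (hc : Tendsto c l (𝓝 c₀)) (hz : z =o[l] x) (hx : Tendsto x l atTop) :
    (fun t => c t * z t + q) =o[l] x := by
  refine IsLittleO.add ?_ (isLittleO_const_left.2 (.inr (tendsto_norm_atTop_atTop.comp hx)))
  simpa using (hc.isBigO_one ℝ).mul_isLittleO hz

lemma tendsto_neg_div_of_eq_mul_neg_div_add {α : Type*} {l : Filter α} {f k u x : α → ℝ}
    {K C : ℝ} (hk : Tendsto k l (𝓝 K)) (hu : u =o[l] x) (hx : ∀ᶠ t in l, x t ≠ 0)
    (hf : ∀ t, f t = k t * (-x t / C + u t)) :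
    Tendsto (fun t => -f t / x t) l (𝓝 (K / C)) := by
  have : Tendsto (fun t => k t * (1 / C - u t / x t)) l (𝓝 (K * (1 / C - 0))) :=
    hk.mul (tendsto_const_nhds.sub hu.tendsto_div_nhds_zero)
  rw [sub_zero, mul_one_div] at this
  refine this.congr' ?_
  filter_upwards [hx] with t ht
  rw [hf]
  field_simp
  ring

lemma tendsto_sub_atTop_of_tendsto_div {α : Type*} {l : Filter α} {f g x : α → ℝ} {a : ℝ}
    (ha : 0 < a) (hx : Tendsto x l atTop) (hf : Tendsto (fun t => f t / x t) l (𝓝 a))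
    (hg : g =o[l] x) : Tendsto (fun t => f t - g t) l atTop := by
  have : Tendsto (fun t => x t * (f t / x t - g t / x t)) l atTop :=
    hx.atTop_mul_pos (by simpa using ha) (hf.sub hg.tendsto_div_nhds_zero)
  refine this.congr' ?_
  filter_upwards [hx.eventually_ne_atTop 0] with t ht
  field_simp

lemma sq_sub_div_sub_le {a d : ℝ} (ha : 0 < a) (hd0 : 0 ≤ d) (hd : d ≤ a / 2) :
    (a ^ 2 - d) / (a - d) ≤ 2 * a := by
  rw [div_le_iff₀ (by linarith)]
  nlinarith

lemma le_two_div_sqrt_sub_one_of_le {L q δ : ℝ} (hL : 1 < L) (hδ0 : 0 ≤ δ)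
    (hδ : δ ≤ exp (-(log (L - 1) / 2)) / 2)
    (hq : q ≤ (exp (-log (L - 1)) - δ) / (exp (-(log (L - 1) / 2)) - δ)) :
    q ≤ 2 / √(L - 1) := by
  have hhalf : exp (-(log (L - 1) / 2)) = (√(L - 1))⁻¹ := by
    rw [exp_neg, exp_half, exp_log (by linarith)]
  have hfull : exp (-log (L - 1)) = exp (-(log (L - 1) / 2)) ^ 2 := by
    rw [← exp_nat_mul]; ring_nf
  rw [hfull] at hq
  rw [div_eq_mul_inv, ← hhalf]
  exact hq.trans (sq_sub_div_sub_le (exp_pos _) hδ0 hδ)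

lemma mul_exp_neg_le_exp_neg_div_two {e a c : ℝ} (he : 0 < e) (h : log 2 - c ≤ -log e - a) :
    e * exp (-c) ≤ exp (-a) / 2 :=
  calc e * exp (-c) = exp (log e - c) := by rw [exp_sub, exp_log he, div_eq_mul_inv, exp_neg]
    _ ≤ exp (-a - log 2) := exp_le_exp.2 (by linarith)
    _ = exp (-a) / 2 := by rw [exp_sub, exp_log two_pos]

lemma log_exp_sub_one_lt {y : ℝ} (hy : 0 < y) : log (exp y - 1) < y := by
  have h : 0 < exp y - 1 := by linarith [add_one_lt_exp hy.ne']
  calc log (exp y - 1) < log (exp y) := log_lt_log h (by linarith)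
    _ = y := log_exp y

lemma mul_div_add_log_exp_sub_one_div_le {C ρ L : ℝ} (hC : 0 < C) (h : 0 < L * (C - ρ)) :
    L * ρ / C + log (exp (L * (C - ρ)) - 1) / C ≤ L := by
  rw [← add_div, div_le_iff₀ hC]
  linarith [log_exp_sub_one_lt h]

lemma le_add_three_sqrt_of_mul_le {L q w : ℝ} (hL : 65 ≤ L) (hq : q ≤ 2 / √(L - 1))
    (hw : (1 - 1 / L) * (1 - q) * w ≤ L) : w ≤ L + 3 * √L := by
  -- With `L = t² + 1` everything reduces to `(t - 2) t (L + 3 t) ≥ L²`, which holds once `t ≥ 8`.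
  set t := √(L - 1) with ht
  have ht8 : 8 ≤ t := by
    rw [ht, show (8 : ℝ) = √(8 ^ 2) by simp]
    exact sqrt_le_sqrt (by linarith)
  have hLt : L = t ^ 2 + 1 := by rw [ht, sq_sqrt (by linarith)]; ring
  have htL : t ≤ √L := sqrt_le_sqrt (by linarith)
  have hq' : t * q ≤ 2 := by rwa [le_div_iff₀ (by linarith), mul_comm] at hq
  have hK : (t - 2) * t / L ≤ (1 - 1 / L) * (1 - q) := by
    rw [div_le_iff₀ (by linarith), show 1 - 1 / L = t ^ 2 / L by rw [hLt]; field_simp; ring]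
    field_simp
    nlinarith
  have hKpos : 0 < (t - 2) * t / L := div_pos (by nlinarith) (by linarith)
  have hpoly : L ≤ (t - 2) * t / L * (L + 3 * t) := by
    rw [div_mul_eq_mul_div, le_div_iff₀ (by linarith), hLt]
    nlinarith [pow_le_pow_left₀ (by norm_num) ht8 3]
  have hwt : w ≤ L + 3 * t := by
    refine le_of_mul_le_mul_left ?_ (hKpos.trans_le hK)
    calc (1 - 1 / L) * (1 - q) * w ≤ L := hw
      _ ≤ (t - 2) * t / L * (L + 3 * t) := hpoly
      _ ≤ (1 - 1 / L) * (1 - q) * (L + 3 * t) := by gcongr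
  linarith

theorem moderate_deviations_parameter_choice_general
    (B Bstar C : ℝ) (hB : 0 < B) (hC : 0 < C)
    (C2 q1 : ℝ) (ρ' : ℝ → ℝ)
    (hρ0 : Tendsto ρ' atTop (𝓝 0))
    (hρsqrt : Tendsto (fun L => ρ' L * Real.sqrt L) atTop atTop)
    (p0 Z0 A ε : ℝ → ℝ)
    (hp0 : ∀ L, p0 L = 1 - 1 / L)
    (hZ0 : ∀ L, Z0 L = Real.log (p0 L / (1 - p0 L)))
    (hA : ∀ L, A L = Z0 L / 2)
    (hε : ∀ L, ε L = Real.exp ((B / p0 L) *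
      (-(L * ρ' L) / C + (1 / C - p0 L / B + 3 * (1 - p0 L) / (2 * Bstar)) * Z0 L + q1)))
    (p1 w : ℝ → ℝ)
    (hp1 : ∀ᶠ L in atTop, 0 ≤ p1 L ∧
      p1 L ≤ (Real.exp (-Z0 L) - ε L * Real.exp (-C2)) /
             (Real.exp (-A L) - ε L * Real.exp (-C2)))
    (hw : ∀ᶠ L in atTop, p0 L * (1 - p1 L) * w L =
      -(p0 L * Real.log (ε L)) / B + Real.log (Real.exp (L * (C - ρ' L)) - 1) / C +
      (1 / C - p0 L / B + (1 - p0 L) / Bstar) * Z0 L +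
      (1 - p0 L) * |A L| / Bstar + q1) :
    ((B / C : ℝ) : EReal) ≤
      Filter.liminf (fun L => ((-Real.log (ε L) / (L * ρ' L) : ℝ) : EReal)) atTop ∧
    ∀ᶠ L in atTop, w L ≤ L + 3 * Real.sqrt L := by
  have hx := tendsto_mul_atTop_of_tendsto_mul_sqrt hρsqrt
  have hZ0log : Z0 =ᶠ[atTop] fun L => log (L - 1) := by
    filter_upwards [eventually_gt_atTop 1] with L hL
    rw [hZ0, hp0, log_odds_one_sub_inv hL]
  have hZ0x : Z0 =o[atTop] fun L => L * ρ' L :=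
    (isBigO_log_sub_one_log.congr' hZ0log.symm EventuallyEq.rfl).trans_isLittleO
      (isLittleO_log_sqrt.trans (isLittleO_sqrt_mul_of_tendsto_mul_sqrt hρsqrt))
  have hp0_lim : Tendsto p0 atTop (𝓝 1) := by
    simpa [funext hp0] using (tendsto_const_nhds.sub tendsto_inv_atTop_zero :
      Tendsto (fun L : ℝ => 1 - L⁻¹) atTop (𝓝 (1 - 0)))
  have hexponent : Tendsto (fun L => -log (ε L) / (L * ρ' L)) atTop (𝓝 (B / C)) := by
    have hcoeff : Tendsto (fun L => 1 / C - p0 L / B + 3 * (1 - p0 L) / (2 * Bstar)) atTop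
        (𝓝 (1 / C - 1 / B + 3 * (1 - 1) / (2 * Bstar))) :=
      (tendsto_const_nhds.sub (hp0_lim.div_const B)).add
        (((tendsto_const_nhds.sub hp0_lim).const_mul 3).div_const _)
    have hfactor : Tendsto (fun L => B / p0 L) atTop (𝓝 (B / 1)) :=
      tendsto_const_nhds.div hp0_lim one_ne_zero
    simpa using tendsto_neg_div_of_eq_mul_neg_div_add hfactor
      (isLittleO_mul_add_const hcoeff hZ0x hx) (hx.eventually_ne_atTop 0)
      fun L => by rw [hε, log_exp, add_assoc]
  refine ⟨(EReal.tendsto_coe.2 hexponent).liminf_eq.ge, ?_⟩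
  have hεpos (L : ℝ) : 0 < ε L := hε L ▸ exp_pos _
  have hsmall : ∀ᶠ L in atTop, ε L * exp (-C2) ≤ exp (-A L) / 2 := by
    have hAx : A =o[atTop] fun L => L * ρ' L := by
      simpa only [funext hA, div_eq_mul_inv, mul_comm] using hZ0x.const_mul_left (2 : ℝ)⁻¹
    filter_upwards [(tendsto_sub_atTop_of_tendsto_div (div_pos hB hC) hx hexponent hAx
      ).eventually_ge_atTop (log 2 - C2)] with L hL
    exact mul_exp_neg_le_exp_neg_div_two (hεpos L) hL
  filter_upwards [hp1, hw, hZ0log, hsmall, eventually_ge_atTop 65,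
    hρ0.eventually (eventually_lt_nhds hC)] with L hp1L hwL hZL hsmL hL hρL
  have hAL : 0 ≤ A L := by rw [hA, hZL]; exact div_nonneg (log_nonneg (by linarith)) two_pos.le
  have hid : p0 L * (1 - p1 L) * w L = L * ρ' L / C + log (exp (L * (C - ρ' L)) - 1) / C := by
    have hp0L : p0 L ≠ 0 := by
      rw [hp0, sub_ne_zero, ne_comm, one_div, inv_ne_one]; linarith
    -- the `Z0`- and `q1`-terms of `ε` were chosen to cancel those of the equation for `w`
    rw [hwL, abs_of_nonneg hAL, hA, hε, log_exp]
    field_simp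
    ring
  rw [hA, hZL] at hp1L hsmL
  refine le_add_three_sqrt_of_mul_le hL (le_two_div_sqrt_sub_one_of_le (by linarith)
    (mul_nonneg (hεpos L).le (exp_pos _).le) hsmL hp1L.2) ?_
  rw [← hp0, hid]
  exact mul_div_add_log_exp_sub_one_div_le hC (mul_pos (by linarith) (sub_pos.2 hρL))

/-- choice of parameters in Burnashev's coding scheme in the moderate
deviations regime (Lemma `extralem` of the paper): the error probability `ε_L` has
moderate deviations exponent at least `B/C`, and the expected length `w_L` is at most
`L + 3 √L` for large `L`. -/
theorem moderate_deviations_parameter_choice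
    (B Bstar C : ℝ) (hB : 0 < B) (hBstar : 0 < Bstar) (hC : 0 < C)
    (C2 q1 : ℝ) (ρ' : ℝ → ℝ) (hρpos : ∀ L > (0 : ℝ), 0 < ρ' L)
    (hρ0 : Tendsto ρ' atTop (𝓝 0))
    (hρsqrt : Tendsto (fun L => ρ' L * Real.sqrt L) atTop atTop)
    (p0 Z0 A ε : ℝ → ℝ)
    (hp0 : ∀ L, p0 L = 1 - 1 / L)
    (hZ0 : ∀ L, Z0 L = Real.log (p0 L / (1 - p0 L)))
    (hA : ∀ L, A L = Z0 L / 2)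
    (hε : ∀ L, ε L = Real.exp ((B / p0 L) *
      (-(L * ρ' L) / C + (1 / C - p0 L / B + 3 * (1 - p0 L) / (2 * Bstar)) * Z0 L + q1)))
    (p1 w : ℝ → ℝ)
    (hp1 : ∀ᶠ L in atTop, 0 ≤ p1 L ∧
      p1 L ≤ (Real.exp (-Z0 L) - ε L * Real.exp (-C2)) /
             (Real.exp (-A L) - ε L * Real.exp (-C2)))
    (hw : ∀ᶠ L in atTop, p0 L * (1 - p1 L) * w L =
      -(p0 L * Real.log (ε L)) / B + Real.log (Real.exp (L * (C - ρ' L)) - 1) / C +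
      (1 / C - p0 L / B + (1 - p0 L) / Bstar) * Z0 L +
      (1 - p0 L) * |A L| / Bstar + q1) :
    ((B / C : ℝ) : EReal) ≤
      Filter.liminf (fun L => ((-Real.log (ε L) / (L * ρ' L) : ℝ) : EReal)) atTop ∧
    ∀ᶠ L in atTop, w L ≤ L + 3 * Real.sqrt L :=
  moderate_deviations_parameter_choice_general B Bstar C hB hC C2 q1 ρ' hρ0 hρsqrt p0 Z0 A ε hp0 hZ0
    hA hε p1 w hp1 hw
end

section
/- Let B, C be positive real constants. Let {ρ_N}_{N∈ℕ} be a sequence of positive real numbers with ρ_N → 0 and ρ_N·√N → ∞ as N → ∞, and let {φ_N}_{N∈ℕ} be a sequence of real numbers in the open interval (0,1). Suppose there exist a constant K ∈ ℝ and N₀ ∈ ℕ such that for all N ≥ N₀: −ln(φ_N)/(N·ρ_N) − ln(N·C − N·ρ_N − ln φ_N)/(N·ρ_N) ≤ B/(C·N·ρ_N) + B·φ_N/ρ_N − B·φ_N/C + B/C + K/(N·ρ_N). Then limsup_{N→∞} (−ln φ_N)/N < ∞. -/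
open Filter
open scoped Topology

private lemma log_le_half (t : ℝ) (ht : 0 < t) : Real.log t ≤ t / 2 := by
  have h1 : Real.log (t / 2) ≤ t / 2 - 1 :=
    Real.log_le_sub_one_of_pos (by positivity)
  rw [Real.log_div ht.ne' two_ne_zero] at h1
  have h2 : Real.log 2 < 0.6931471808 := Real.log_two_lt_d9
  linarith

set_option maxHeartbeats 800000 in
/-- under the key converse inequality in the moderate deviations regime,
the error exponent of `φ_N` at (linear) speed `N` is finite (Lemma `lemconverse`). -/
theorem limsup_log_error_div_N_finite (B C : ℝ) (hB : 0 < B) (hC : 0 < C)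
    (ρ φ : ℕ → ℝ) (hρpos : ∀ N, 0 < ρ N)
    (hρ0 : Tendsto ρ atTop (𝓝 0))
    (hρsqrt : Tendsto (fun N => ρ N * Real.sqrt N) atTop atTop)
    (hφ : ∀ N, φ N ∈ Set.Ioo (0 : ℝ) 1)
    (K : ℝ) (N₀ : ℕ)
    (hineq : ∀ N : ℕ, N ≥ N₀ →
      -Real.log (φ N) / (N * ρ N) -
        Real.log ((N : ℝ) * C - (N : ℝ) * ρ N - Real.log (φ N)) / ((N : ℝ) * ρ N) ≤
      B / (C * (N : ℝ) * ρ N) + B * φ N / ρ N - B * φ N / C + B / C +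
        K / ((N : ℝ) * ρ N)) :
    Filter.limsup (fun N : ℕ => ((-Real.log (φ N) / (N : ℝ) : ℝ) : EReal)) atTop < ⊤ := by
  set D : ℝ := |B / C + K| + B * (1 + 1 / C) with hDdef
  have hD0 : 0 ≤ D := by positivity
  have hbound : ∀ᶠ N : ℕ in atTop, -Real.log (φ N) / (N : ℝ) ≤ 2 * D + C := by
    have hsmall : ∀ᶠ N : ℕ in atTop, ρ N < min (C / 2) 1 := by
      have : ∀ᶠ x in 𝓝 (0 : ℝ), x < min (C / 2) 1 :=
        Filter.Tendsto.eventually_lt_const (by positivity) tendsto_id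
      exact hρ0.eventually this
    filter_upwards [hsmall, eventually_ge_atTop N₀, eventually_ge_atTop 1]
      with N hρN hN0 hN1
    have hn1 : (1 : ℝ) ≤ (N : ℝ) := by exact_mod_cast hN1
    have hn : (0 : ℝ) < (N : ℝ) := lt_of_lt_of_le one_pos hn1
    set n : ℝ := (N : ℝ) with hndef
    have hρp : 0 < ρ N := hρpos N
    have hρhalf : ρ N < C / 2 := lt_of_lt_of_le hρN (min_le_left _ _)
    have hρ1 : ρ N < 1 := lt_of_lt_of_le hρN (min_le_right _ _)
    have ht : 0 < n * ρ N := by positivity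
    set x : ℝ := -Real.log (φ N) with hxdef
    have hφN := hφ N
    have hφ0 : 0 < φ N := hφN.1
    have hφ1 : φ N < 1 := hφN.2
    have hx : 0 < x := by
      have := Real.log_neg hφ0 hφ1
      simp only [hxdef]; linarith
    -- rewrite hineq into multiplied form
    have key := hineq N hN0
    rw [div_sub_div_same] at key
    have key2 := (div_le_iff₀ ht).mp key
    have harg : n * C - n * ρ N - Real.log (φ N) = n * C - n * ρ N + x := by
      rw [hxdef]; ring
    rw [harg] at key2
    have hRHS : (B / (C * n * ρ N) + B * φ N / ρ N - B * φ N / C + B / C + K / (n * ρ N))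
          * (n * ρ N)
        = B / C + B * φ N * n - B * φ N * n * ρ N / C + B * n * ρ N / C + K := by
      field_simp
    rw [hRHS] at key2
    -- key2 : x - log(nC - nρ + x) ≤ B/C + Bφn - Bφnρ/C + Bnρ/C + K
    have hK : B / C + K ≤ |B / C + K| := le_abs_self _
    have hRbound : B / C + B * φ N * n - B * φ N * n * ρ N / C + B * n * ρ N / C + K
        ≤ D * n := by
      have h1 : B * φ N * n ≤ B * n := by
        nlinarith [mul_nonneg (mul_nonneg hB.le hn.le) (by linarith : (0:ℝ) ≤ 1 - φ N)]
      have h2 : 0 ≤ B * φ N * n * ρ N / C := by positivity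
      have hnum : B * n * ρ N ≤ B * n := by
        nlinarith [mul_nonneg (mul_nonneg hB.le hn.le) (by linarith : (0:ℝ) ≤ 1 - ρ N)]
      have h3 : B * n * ρ N / C ≤ B * n / C := by
        gcongr
      have h4 : |B / C + K| ≤ |B / C + K| * n := le_mul_of_one_le_right (abs_nonneg _) hn1
      have hexp : D * n = |B / C + K| * n + B * n + B * n / C := by
        rw [hDdef]; field_simp; ring
      linarith
    -- bounds for the log argument
    have hCρ : 0 < C - ρ N := by linarith
    have harg_pos : 0 < n * C - n * ρ N + x := by nlinarith [mul_pos hn hCρ]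
    have harg_le : n * C - n * ρ N + x ≤ n * C + x := by nlinarith [mul_pos hn hρp]
    have hlog : Real.log (n * C - n * ρ N + x) ≤ (n * C + x) / 2 := by
      calc Real.log (n * C - n * ρ N + x) ≤ Real.log (n * C + x) :=
            Real.log_le_log harg_pos harg_le
        _ ≤ (n * C + x) / 2 := log_le_half _ (by positivity)
    have hexp2 : (2 * D + C) * n = 2 * (D * n) + C * n := by ring
    have hx_bound : x ≤ (2 * D + C) * n := by
      clear_value D n x
      subst hxdef
      linarith [key2, hRbound, hlog]
    rw [div_le_iff₀ hn]
    exact hx_bound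
  have hle : Filter.limsup (fun N : ℕ => ((-Real.log (φ N) / (N : ℝ) : ℝ) : EReal)) atTop
      ≤ ((2 * D + C : ℝ) : EReal) := by
    apply limsup_le_of_le (by isBoundedDefault)
    filter_upwards [hbound] with N h
    exact EReal.coe_le_coe_iff.mpr h
  exact lt_of_le_of_lt hle (EReal.coe_lt_top _)
end

section
/- Let (Ω, 𝓕, P) be a probability space with a filtration {𝓕_n}_{n≥1} and let {U_n}_{n≥1} be a sequence of square-integrable real random variables adapted to {𝓕_n} with E(U_n) = 0 for all n. Suppose {U_n} is *-submixing with respect to {𝓕_n}, i.e., there exist N ∈ ℕ and a function f on the integers n ≥ N with f(n) ≥ 0 and f(n) → 0 as n → ∞, such that for all n ≥ N and all m ≥ 1, |E(U_{n+m} | 𝓕_m) − E(U_{n+m})| ≤ f(n)·E|U_{n+m}| almost surely. Let {b_n}_{n≥1} be a sequence of positive real numbers increasing to ∞ such that Σ_{n=1}^∞ b_n^{−2}·E(U_n²) < ∞ and sup_n b_n^{−1}·Σ_{i=1}^n E|U_i| < ∞. Then b_n^{−1}·Σ_{i=1}^n U_i → 0 almost surely as n → ∞. -/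
/-!
Fix a lag `k ≥ 1` and split `U i = (U i - E(U i | 𝓕 (i - k))) + E(U i | 𝓕 (i - k))` for `i > k`.
Along each residue class modulo `k` the first parts are martingale differences whose second
moments, weighted by `b⁻²`, are summable, so the L²-martingale convergence theorem and
Kronecker's lemma make their normalized partial sums vanish. By `*`-submixing the second parts
are at most `f k * E|U i|`, so their normalized partial sums are at most
`f k * sup_n b_n⁻¹ ∑ E|U i|` plus a term vanishing as `n → ∞`. Letting `k → ∞` finishes.
-/

open MeasureTheory Filter Finset
open scoped Topology

section Kronecker

variable {b : ℕ → ℝ}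

theorem tendsto_inv_mul_sum_range_sub_mul (hbpos : ∀ n, 0 < b n) (hbmono : Monotone b)
    (hbtop : Tendsto b atTop atTop) {s : ℕ → ℝ} {l : ℝ} (hs : Tendsto s atTop (𝓝 l)) :
    Tendsto (fun n => (b n)⁻¹ * ∑ i ∈ range n, (b (i + 1) - b i) * s i) atTop (𝓝 l) := by
  have hw : ∀ i, 0 ≤ b (i + 1) - b i := fun i => sub_nonneg.2 (hbmono i.le_succ)
  have hsum_w : ∀ n, ∑ i ∈ range n, (b (i + 1) - b i) = b n - b 0 := sum_range_sub b
  have hsmall : (fun n => ∑ i ∈ range n, (b (i + 1) - b i) * (s i - l)) =o[atTop] b := by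
    have hterm : (fun i => (b (i + 1) - b i) * (s i - l)) =o[atTop] fun i => b (i + 1) - b i := by
      simpa using (Asymptotics.isBigO_refl (fun i => b (i + 1) - b i) atTop).mul_isLittleO
        ((Asymptotics.isLittleO_one_iff ℝ).2 (tendsto_sub_nhds_zero_iff.2 hs))
    refine (hterm.sum_range hw ?_).trans_isBigO (Asymptotics.isBigO_of_le _ fun n => ?_)
    · exact (tendsto_atTop_add_const_right _ (-b 0) hbtop).congr fun n => by
        rw [hsum_w]; ring
    · rw [hsum_w, Real.norm_of_nonneg (sub_nonneg.2 (hbmono n.zero_le)),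
        Real.norm_of_nonneg (hbpos n).le]
      linarith [hbpos 0]
  have hsplit : ∀ n, (b n)⁻¹ * ∑ i ∈ range n, (b (i + 1) - b i) * s i =
      (∑ i ∈ range n, (b (i + 1) - b i) * (s i - l)) / b n + (l - l * b 0 * (b n)⁻¹) := by
    intro n
    have hmul : ∑ i ∈ range n, (b (i + 1) - b i) * s i =
        ∑ i ∈ range n, (b (i + 1) - b i) * (s i - l) + (b n - b 0) * l := by
      rw [← hsum_w, sum_mul, ← sum_add_distrib]
      exact sum_congr rfl fun i _ => by ring
    rw [hmul]
    field_simp [(hbpos n).ne']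
  simpa [hsplit] using hsmall.tendsto_div_nhds_zero.add
    (tendsto_const_nhds.sub (tendsto_const_nhds.mul hbtop.inv_tendsto_atTop))

theorem tendsto_inv_mul_sum_range_of_tendsto_sum_range_div (hbpos : ∀ n, 0 < b n)
    (hbmono : Monotone b) (hbtop : Tendsto b atTop atTop) {x : ℕ → ℝ} {l : ℝ}
    (hx : Tendsto (fun n => ∑ i ∈ range (n + 1), x i / b i) atTop (𝓝 l)) :
    Tendsto (fun n => (b n)⁻¹ * ∑ i ∈ range (n + 1), x i) atTop (𝓝 0) := by
  have habel : ∀ n, (b n)⁻¹ * ∑ i ∈ range (n + 1), x i = ∑ i ∈ range (n + 1), x i / b i -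
      (b n)⁻¹ * ∑ i ∈ range n, (b (i + 1) - b i) * ∑ j ∈ range (i + 1), x j / b j := by
    intro n
    have h := sum_range_by_parts b (fun i => x i / b i) (n + 1)
    simp only [smul_eq_mul, mul_div_cancel₀ _ (hbpos _).ne', add_tsub_cancel_right] at h
    rw [h, mul_sub, inv_mul_cancel_left₀ (hbpos n).ne']
  simpa [habel] using hx.sub (tendsto_inv_mul_sum_range_sub_mul hbpos hbmono hbtop hx)

end Kronecker

theorem sum_filter_mod_eq_sum_range {M : Type*} [AddCommMonoid M] (D : ℕ → M) {k r n : ℕ}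
    (hr : r < k) (hrn : r ≤ n) :
    ∑ i ∈ (range (n + 1)).filter (· % k = r), D i =
      ∑ j ∈ range ((n - r) / k + 1), D (r + j * k) := by
  have hk : 0 < k := by omega
  refine sum_nbij' (· / k) (r + · * k) (fun i hi => ?_) (fun j hj => ?_) (fun i hi => ?_)
    (fun j _ => ?_) (fun i hi => ?_)
  all_goals simp only [mem_filter, mem_range] at *
  · have := Nat.mod_add_div i k
    rw [Nat.lt_succ_iff, Nat.le_div_iff_mul_le hk]
    rw [mul_comm] at this
    omega
  · have := Nat.div_mul_le_self (n - r) k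
    have := Nat.mul_le_mul_right k (Nat.lt_succ_iff.1 hj)
    refine ⟨by omega, ?_⟩
    rw [Nat.add_mul_mod_self_right, Nat.mod_eq_of_lt hr]
  · have := Nat.mod_add_div i k
    rw [mul_comm] at this
    omega
  · rw [Nat.add_mul_div_right _ _ hk, Nat.div_eq_of_lt hr, zero_add]
  · have := Nat.mod_add_div i k
    rw [mul_comm] at this
    congr 1
    omega

theorem tendsto_inv_mul_sum_range_of_forall_mod {b : ℕ → ℝ} (hbpos : ∀ n, 0 < b n)
    (hbmono : Monotone b) {k : ℕ} (hk : 0 < k) {D : ℕ → ℝ}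
    (h : ∀ r < k, Tendsto (fun J => (b (r + J * k))⁻¹ * ∑ j ∈ range (J + 1), D (r + j * k))
      atTop (𝓝 0)) :
    Tendsto (fun n => (b n)⁻¹ * ∑ i ∈ range (n + 1), D i) atTop (𝓝 0) := by
  have hsplit : ∀ n, (b n)⁻¹ * ∑ i ∈ range (n + 1), D i =
      ∑ r ∈ range k, (b n)⁻¹ * ∑ i ∈ (range (n + 1)).filter (· % k = r), D i := fun n => by
    rw [← mul_sum, sum_fiberwise_of_maps_to fun i _ => mem_range.2 (Nat.mod_lt i hk)]
  simp only [hsplit]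
  rw [show (0 : ℝ) = ∑ _r ∈ range k, 0 by simp]
  refine tendsto_finsetSum _ fun r hr => ?_
  have hr : r < k := mem_range.1 hr
  have hJ : Tendsto (fun n => (n - r) / k) atTop atTop :=
    (Nat.tendsto_div_const_atTop hk.ne').comp (tendsto_sub_atTop_nat r)
  have hlim := ((h r hr).comp hJ).norm
  rw [norm_zero] at hlim
  refine squeeze_zero_norm' ?_ hlim
  filter_upwards [eventually_ge_atTop r] with n hrn
  have hb : b (r + (n - r) / k * k) ≤ b n :=
    hbmono (by have := Nat.div_mul_le_self (n - r) k; omega)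
  rw [sum_filter_mod_eq_sum_range D hr hrn, Function.comp_apply, norm_mul, norm_mul, norm_inv,
    norm_inv, Real.norm_of_nonneg (hbpos _).le, Real.norm_of_nonneg (hbpos _).le]
  gcongr
  exact hbpos _

theorem abs_sum_range_le_of_abs_le {u c a : ℕ → ℝ} {k : ℕ} (ha : ∀ i, 0 ≤ a i)
    (hcu : ∀ i ≤ k, c i = u i) (hca : ∀ i, k < i → |c i| ≤ a i) (n : ℕ) :
    |∑ i ∈ range (n + 1), c i| ≤ ∑ i ∈ range (k + 1), |u i| + ∑ i ∈ range (n + 1), a i := by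
  calc |∑ i ∈ range (n + 1), c i|
      ≤ ∑ i ∈ range (n + 1), ((if i ≤ k then |u i| else 0) + a i) := by
        refine (abs_sum_le_sum_abs _ _).trans (sum_le_sum fun i _ => ?_)
        split_ifs with h
        · rw [hcu i h]
          linarith [ha i]
        · simpa using hca i (by omega)
    _ = ∑ i ∈ (range (n + 1)).filter (· ≤ k), |u i| + ∑ i ∈ range (n + 1), a i := by
        rw [sum_add_distrib, sum_filter]
    _ ≤ ∑ i ∈ range (k + 1), |u i| + ∑ i ∈ range (n + 1), a i := by
        gcongr
        intro i hi
        simp only [mem_filter, mem_range] at hi ⊢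
        omega

theorem abs_inv_mul_sum_range_le {b u c a : ℕ → ℝ} {k : ℕ} {δ M : ℝ} (hb : ∀ n, 0 < b n)
    (hδ : 0 ≤ δ) (ha : ∀ i, 0 ≤ a i) (haM : ∀ n, (b n)⁻¹ * ∑ i ∈ range (n + 1), a i ≤ M)
    (hcu : ∀ i ≤ k, c i = u i) (hca : ∀ i, k < i → |c i| ≤ δ * a i) (n : ℕ) :
    |(b n)⁻¹ * ∑ i ∈ range (n + 1), u i| ≤
      |(b n)⁻¹ * ∑ i ∈ range (n + 1), (u i - c i)| + (b n)⁻¹ * ∑ i ∈ range (k + 1), |u i| +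
        δ * M := by
  have hbn : 0 < (b n)⁻¹ := inv_pos.2 (hb n)
  have hc := abs_sum_range_le_of_abs_le (fun i => mul_nonneg hδ (ha i)) hcu hca n
  rw [← mul_sum] at hc
  calc |(b n)⁻¹ * ∑ i ∈ range (n + 1), u i|
      = |(b n)⁻¹ * ∑ i ∈ range (n + 1), (u i - c i) + (b n)⁻¹ * ∑ i ∈ range (n + 1), c i| := by
        rw [← mul_add, ← sum_add_distrib]
        simp only [sub_add_cancel]
    _ ≤ |(b n)⁻¹ * ∑ i ∈ range (n + 1), (u i - c i)| +
          (b n)⁻¹ * |∑ i ∈ range (n + 1), c i| := by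
        rw [← abs_of_pos hbn, ← abs_mul, abs_of_pos hbn]
        exact abs_add_le _ _
    _ ≤ |(b n)⁻¹ * ∑ i ∈ range (n + 1), (u i - c i)| + (b n)⁻¹ * ∑ i ∈ range (k + 1), |u i| +
          δ * ((b n)⁻¹ * ∑ i ∈ range (n + 1), a i) := by
        nlinarith [mul_le_mul_of_nonneg_left hc hbn.le]
    _ ≤ _ := by gcongr; exact haM n

theorem tendsto_nhds_zero_of_forall_abs_le_add {a δ : ℕ → ℝ} (hδ : Tendsto δ atTop (𝓝 0))
    {K : ℕ} (h : ∀ k ≥ K, ∃ r : ℕ → ℝ, Tendsto r atTop (𝓝 0) ∧ ∀ n, |a n| ≤ r n + δ k) :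
    Tendsto a atTop (𝓝 0) := by
  refine Metric.tendsto_atTop.2 fun ε hε => ?_
  obtain ⟨k, hkK, hδk⟩ :=
    ((eventually_ge_atTop K).and (hδ.eventually (gt_mem_nhds (half_pos hε)))).exists
  obtain ⟨r, hr, hbound⟩ := h k hkK
  obtain ⟨N, hN⟩ := eventually_atTop.1 (hr.eventually (gt_mem_nhds (half_pos hε)))
  exact ⟨N, fun n hn => by rw [Real.dist_eq, sub_zero]; linarith [hbound n, hN n hn]⟩

namespace MeasureTheory

variable {Ω : Type*} {m₀ : MeasurableSpace Ω} {μ : Measure Ω}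

def Filtration.reindex {ι κ : Type*} [Preorder ι] [Preorder κ] (𝓕 : Filtration ι m₀)
    {φ : κ → ι} (hφ : Monotone φ) : Filtration κ m₀ where
  seq j := 𝓕 (φ j)
  mono' _ _ hij := 𝓕.mono (hφ hij)
  le' _ := 𝓕.le _

section FiniteMeasure

variable [IsFiniteMeasure μ]

theorem integral_sq_sub_condExp_le {m : MeasurableSpace Ω} (hm : m ≤ m₀) {X : Ω → ℝ}
    (hX : MemLp X 2 μ) : ∫ ω, (X ω - μ[X | m] ω) ^ 2 ∂μ ≤ ∫ ω, X ω ^ 2 ∂μ :=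
  calc ∫ ω, (X ω - μ[X | m] ω) ^ 2 ∂μ = ∫ ω, ProbabilityTheory.condVar m X μ ω ∂μ :=
        (integral_condExp hm).symm
    _ ≤ ∫ ω, μ[X ^ 2 | m] ω ∂μ := integral_mono_ae ProbabilityTheory.integrable_condVar
        integrable_condExp (ProbabilityTheory.condVar_ae_le_condExp_sq hm hX)
    _ = ∫ ω, X ω ^ 2 ∂μ := integral_condExp hm

theorem integral_add_sq_of_condExp_eq_zero {m : MeasurableSpace Ω} (hm : m ≤ m₀) {X Y : Ω → ℝ}
    (hXm : StronglyMeasurable[m] X) (hX : MemLp X 2 μ) (hY : MemLp Y 2 μ)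
    (hYm : μ[Y | m] =ᵐ[μ] 0) :
    ∫ ω, (X ω + Y ω) ^ 2 ∂μ = ∫ ω, X ω ^ 2 ∂μ + ∫ ω, Y ω ^ 2 ∂μ := by
  have hXY : Integrable (X * Y) μ := memLp_one_iff_integrable.1 (hY.mul hX)
  have hcross : ∫ ω, X ω * Y ω ∂μ = 0 := calc
    ∫ ω, X ω * Y ω ∂μ = ∫ ω, (X * μ[Y | m]) ω ∂μ := by
      rw [← integral_condExp hm]
      exact integral_congr_ae
        (condExp_mul_of_stronglyMeasurable_left hXm hXY (hY.integrable one_le_two))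
    _ = 0 := by
      rw [integral_congr_ae (EventuallyEq.rfl.mul hYm)]
      simp
  have h2XY : Integrable (fun ω => 2 * (X ω * Y ω)) μ := hXY.const_mul 2
  calc ∫ ω, (X ω + Y ω) ^ 2 ∂μ = ∫ ω, X ω ^ 2 + 2 * (X ω * Y ω) + Y ω ^ 2 ∂μ := by
        simp only [add_sq, mul_assoc]
    _ = ∫ ω, X ω ^ 2 ∂μ + 2 * ∫ ω, X ω * Y ω ∂μ + ∫ ω, Y ω ^ 2 ∂μ := by
        rw [integral_add (f := fun ω => X ω ^ 2 + 2 * (X ω * Y ω)) (hX.integrable_sq.add h2XY)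
          hY.integrable_sq, integral_add hX.integrable_sq h2XY, integral_const_mul]
    _ = ∫ ω, X ω ^ 2 ∂μ + ∫ ω, Y ω ^ 2 ∂μ := by rw [hcross, mul_zero, add_zero]

theorem eLpNorm_one_le_of_integral_sq_le {X : Ω → ℝ} (hX : MemLp X 2 μ) {C : ℝ}
    (hC : ∫ ω, X ω ^ 2 ∂μ ≤ C) :
    eLpNorm X 1 μ ≤ ENNReal.ofReal ((μ.real Set.univ + C) / 2) := by
  rw [eLpNorm_one_eq_lintegral_enorm,
    ← ofReal_integral_norm_eq_lintegral_enorm (hX.integrable one_le_two)]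
  refine ENNReal.ofReal_le_ofReal ?_
  calc ∫ ω, ‖X ω‖ ∂μ ≤ ∫ ω, (1 + X ω ^ 2) / 2 ∂μ := by
        refine integral_mono (hX.integrable one_le_two).norm
          (((integrable_const 1).add hX.integrable_sq).div_const 2) fun ω => ?_
        rw [Real.norm_eq_abs]
        nlinarith [sq_nonneg (|X ω| - 1), sq_abs (X ω)]
    _ = (μ.real Set.univ + ∫ ω, X ω ^ 2 ∂μ) / 2 := by
        rw [integral_div, integral_add (integrable_const 1) hX.integrable_sq, integral_const,
          smul_eq_mul, mul_one]
    _ ≤ (μ.real Set.univ + C) / 2 := by linarith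

theorem ae_exists_tendsto_sum_range_of_condExp_eq_zero {𝓖 : Filtration ℕ m₀} {g : ℕ → Ω → ℝ}
    (hg : StronglyAdapted 𝓖 g) (hL2 : ∀ j, MemLp (g j) 2 μ)
    (hmds : ∀ j, μ[g (j + 1) | 𝓖 j] =ᵐ[μ] 0) (hsum : Summable fun j => ∫ ω, g j ω ^ 2 ∂μ) :
    ∀ᵐ ω ∂μ, ∃ c, Tendsto (fun n => ∑ j ∈ range (n + 1), g j ω) atTop (𝓝 c) := by
  set S : ℕ → Ω → ℝ := fun n => ∑ j ∈ range (n + 1), g j with hS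
  have hS_succ : ∀ n, S (n + 1) = S n + g (n + 1) := fun n => sum_range_succ _ _
  have hS_adapted : StronglyAdapted 𝓖 S := fun n => Finset.stronglyMeasurable_sum _
    fun j hj => (hg j).mono (𝓖.mono (Nat.lt_succ_iff.1 (mem_range.1 hj)))
  have hS_L2 : ∀ n, MemLp (S n) 2 μ := fun n => memLp_finsetSum' _ fun j _ => hL2 j
  have hS_mart : Martingale S 𝓖 μ := martingale_of_condExp_sub_eq_zero_nat hS_adapted
    (fun n => (hS_L2 n).integrable one_le_two) fun n => by simpa [hS_succ] using hmds n
  have hS_sq : ∀ n, ∫ ω, S n ω ^ 2 ∂μ = ∑ j ∈ range (n + 1), ∫ ω, g j ω ^ 2 ∂μ := by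
    intro n
    induction n with
    | zero => simp [hS]
    | succ n ih =>
      rw [sum_range_succ, ← ih, hS_succ]
      exact integral_add_sq_of_condExp_eq_zero (𝓖.le n) (hS_adapted n) (hS_L2 n) (hL2 _) (hmds n)
  have hS_bdd : ∀ n, eLpNorm (S n) 1 μ ≤
      ENNReal.ofReal ((μ.real Set.univ + ∑' j, ∫ ω, g j ω ^ 2 ∂μ) / 2) :=
    fun n => eLpNorm_one_le_of_integral_sq_le (hS_L2 n) <| (hS_sq n).trans_le <|
      hsum.sum_le_tsum _ fun j _ => integral_nonneg fun ω => sq_nonneg _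
  filter_upwards [hS_mart.submartingale.exists_ae_tendsto_of_bdd hS_bdd] with ω hω
  simpa [hS] using hω

theorem ae_tendsto_inv_mul_sum_range_of_condExp_eq_zero {𝓖 : Filtration ℕ m₀}
    {g : ℕ → Ω → ℝ} (hg : StronglyAdapted 𝓖 g) (hL2 : ∀ j, MemLp (g j) 2 μ)
    (hmds : ∀ j, μ[g (j + 1) | 𝓖 j] =ᵐ[μ] 0) {b : ℕ → ℝ} (hbpos : ∀ n, 0 < b n)
    (hbmono : Monotone b) (hbtop : Tendsto b atTop atTop)
    (hsum : Summable fun j => (b j)⁻¹ ^ 2 * ∫ ω, g j ω ^ 2 ∂μ) :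
    ∀ᵐ ω ∂μ, Tendsto (fun n => (b n)⁻¹ * ∑ j ∈ range (n + 1), g j ω) atTop (𝓝 0) := by
  have hconv := ae_exists_tendsto_sum_range_of_condExp_eq_zero (g := fun j => (b j)⁻¹ • g j)
    (fun j => (hg j).const_smul _) (fun j => (hL2 j).const_smul _)
    (fun j => (condExp_smul _ _ _).trans (by filter_upwards [hmds j] with ω hω; simp [hω]))
    (by simpa [mul_pow, integral_const_mul] using hsum)
  filter_upwards [hconv] with ω ⟨c, hc⟩
  exact tendsto_inv_mul_sum_range_of_tendsto_sum_range_div hbpos hbmono hbtop (l := c)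
    (by simpa [div_eq_inv_mul] using hc)

end FiniteMeasure

end MeasureTheory

section LaggedCondExp

variable {Ω : Type*} {m₀ : MeasurableSpace Ω} {μ : Measure Ω} {𝓕 : Filtration ℕ m₀}
  {U : ℕ → Ω → ℝ} {k i : ℕ}

noncomputable def laggedCondExp (μ : Measure Ω) (𝓕 : Filtration ℕ m₀) (U : ℕ → Ω → ℝ)
    (k i : ℕ) : Ω → ℝ :=
  if k < i then μ[U i | 𝓕 (i - k)] else U i

theorem laggedCondExp_of_lt (h : k < i) : laggedCondExp μ 𝓕 U k i = μ[U i | 𝓕 (i - k)] :=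
  if_pos h

theorem laggedCondExp_of_le (h : i ≤ k) : laggedCondExp μ 𝓕 U k i = U i :=
  if_neg (Nat.not_lt.2 h)

theorem stronglyMeasurable_laggedCondExp (hU : StronglyAdapted 𝓕 U) :
    StronglyMeasurable[𝓕 i] (laggedCondExp μ 𝓕 U k i) := by
  rcases lt_or_ge k i with h | h
  · rw [laggedCondExp_of_lt h]
    exact stronglyMeasurable_condExp.mono (𝓕.mono (Nat.sub_le i k))
  · rw [laggedCondExp_of_le h]
    exact hU i

theorem memLp_laggedCondExp (hU : MemLp (U i) 2 μ) : MemLp (laggedCondExp μ 𝓕 U k i) 2 μ := by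
  rcases lt_or_ge k i with h | h
  · rw [laggedCondExp_of_lt h]
    exact hU.condExp one_le_two
  · rwa [laggedCondExp_of_le h]

theorem ae_abs_laggedCondExp_le {N₀ : ℕ} {f : ℕ → ℝ} (hmean : ∫ ω, U i ω ∂μ = 0)
    (hmix : ∀ n ≥ N₀, ∀ m' ≥ 1, ∀ᵐ ω ∂μ,
      |(μ[U (n + m') | 𝓕 m']) ω - ∫ x, U (n + m') x ∂μ| ≤ f n * ∫ x, |U (n + m') x| ∂μ)
    (hk : N₀ ≤ k) (hki : k < i) :
    ∀ᵐ ω ∂μ, |laggedCondExp μ 𝓕 U k i ω| ≤ f k * ∫ x, |U i x| ∂μ := by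
  obtain ⟨m', hm', rfl⟩ : ∃ m' ≥ 1, i = k + m' := ⟨i - k, by omega, by omega⟩
  simpa [laggedCondExp_of_lt hki, hmean] using hmix k hk m' hm'

variable [IsFiniteMeasure μ]

theorem integral_sq_sub_laggedCondExp_le (hU : MemLp (U i) 2 μ) :
    ∫ ω, (U i ω - laggedCondExp μ 𝓕 U k i ω) ^ 2 ∂μ ≤ ∫ ω, U i ω ^ 2 ∂μ := by
  rcases lt_or_ge k i with h | h
  · rw [laggedCondExp_of_lt h]
    exact integral_sq_sub_condExp_le (𝓕.le _) hU
  · simpa [laggedCondExp_of_le h] using integral_nonneg fun ω => sq_nonneg (U i ω)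

theorem condExp_sub_laggedCondExp_ae_eq_zero (j : ℕ)
    (hU : Integrable (U (j + k)) μ) :
    μ[U (j + k) - laggedCondExp μ 𝓕 U k (j + k) | 𝓕 j] =ᵐ[μ] 0 := by
  rcases Nat.eq_zero_or_pos j with rfl | hj
  · rw [zero_add, laggedCondExp_of_le le_rfl, sub_self, condExp_zero]
  rw [laggedCondExp_of_lt (by omega), Nat.add_sub_cancel]
  filter_upwards [condExp_sub hU (integrable_condExp (m := 𝓕 j) (f := U (j + k))) (𝓕 j)]
    with ω hω
  simp [hω, condExp_of_stronglyMeasurable (𝓕.le j) stronglyMeasurable_condExp integrable_condExp]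

variable {b : ℕ → ℝ}

theorem ae_tendsto_inv_mul_sum_range_sub_laggedCondExp_mod (hU : StronglyAdapted 𝓕 U)
    (hL2 : ∀ n, MemLp (U n) 2 μ) (hbpos : ∀ n, 0 < b n) (hbmono : Monotone b)
    (hbtop : Tendsto b atTop atTop)
    (hsum : Summable fun n => (b n)⁻¹ ^ 2 * ∫ ω, U n ω ^ 2 ∂μ) (hk : 0 < k) (r : ℕ) :
    ∀ᵐ ω ∂μ, Tendsto (fun J => (b (r + J * k))⁻¹ * ∑ j ∈ range (J + 1),
      (U (r + j * k) ω - laggedCondExp μ 𝓕 U k (r + j * k) ω)) atTop (𝓝 0) := by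
  have hφ : StrictMono fun j => r + j * k := fun i j hij => by
    simpa using Nat.mul_lt_mul_of_pos_right hij hk
  refine ae_tendsto_inv_mul_sum_range_of_condExp_eq_zero (𝓖 := 𝓕.reindex hφ.monotone)
    (g := fun j => U (r + j * k) - laggedCondExp μ 𝓕 U k (r + j * k))
    (fun j => (hU _).sub (stronglyMeasurable_laggedCondExp hU))
    (fun j => (hL2 _).sub (memLp_laggedCondExp (hL2 _))) (fun j => ?_) (fun _ => hbpos _)
    (hbmono.comp hφ.monotone) (hbtop.comp hφ.tendsto_atTop) ?_
  · rw [show r + (j + 1) * k = r + j * k + k by ring]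
    exact condExp_sub_laggedCondExp_ae_eq_zero (𝓕 := 𝓕) _ ((hL2 _).integrable one_le_two)
  · refine .of_nonneg_of_le (fun j => by positivity) (fun j => ?_)
      (hsum.comp_injective hφ.injective)
    exact mul_le_mul_of_nonneg_left (integral_sq_sub_laggedCondExp_le (hL2 _)) (by positivity)

theorem ae_tendsto_inv_mul_sum_range_sub_laggedCondExp (hU : StronglyAdapted 𝓕 U)
    (hL2 : ∀ n, MemLp (U n) 2 μ) (hbpos : ∀ n, 0 < b n) (hbmono : Monotone b)
    (hbtop : Tendsto b atTop atTop)
    (hsum : Summable fun n => (b n)⁻¹ ^ 2 * ∫ ω, U n ω ^ 2 ∂μ) (hk : 0 < k) :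
    ∀ᵐ ω ∂μ, Tendsto (fun n => (b n)⁻¹ * ∑ i ∈ range (n + 1),
      (U i ω - laggedCondExp μ 𝓕 U k i ω)) atTop (𝓝 0) := by
  filter_upwards [ae_all_iff.2 (ae_tendsto_inv_mul_sum_range_sub_laggedCondExp_mod hU hL2 hbpos
    hbmono hbtop hsum hk)] with ω hω
  exact tendsto_inv_mul_sum_range_of_forall_mod hbpos hbmono hk fun r _ => hω r

end LaggedCondExp

/-- strong law of large numbers for `*`-submixing sequences of centered,
square-integrable random variables (generalization of Hall–Heyde Theorem 2.20). -/
theorem slln_star_submixing {Ω : Type*} {m : MeasurableSpace Ω}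
    (μ : Measure Ω) [IsProbabilityMeasure μ]
    (𝓕 : Filtration ℕ m) (U : ℕ → Ω → ℝ)
    (hadapted : Adapted 𝓕 U)
    (hL2 : ∀ n, MemLp (U n) 2 μ)
    (hmean : ∀ n, ∫ ω, U n ω ∂μ = 0)
    (N0 : ℕ) (f : ℕ → ℝ)
    (hf0 : ∀ n ≥ N0, 0 ≤ f n)
    (hftend : Tendsto f atTop (𝓝 0))
    (hmix : ∀ n ≥ N0, ∀ m' ≥ 1, ∀ᵐ ω ∂μ,
      |(μ[U (n + m') | 𝓕 m']) ω - ∫ x, U (n + m') x ∂μ| ≤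
        f n * ∫ x, |U (n + m') x| ∂μ)
    (b : ℕ → ℝ) (hbpos : ∀ n, 0 < b n) (hbmono : Monotone b)
    (hbtop : Tendsto b atTop atTop)
    (hsum : Summable fun n => (b n)⁻¹ ^ 2 * ∫ ω, (U n ω) ^ 2 ∂μ)
    (hsup : ∃ M : ℝ, ∀ n : ℕ,
      (b n)⁻¹ * ∑ i ∈ Finset.range (n + 1), ∫ ω, |U i ω| ∂μ ≤ M) :
    ∀ᵐ ω ∂μ, Tendsto
      (fun n : ℕ => (b n)⁻¹ * ∑ i ∈ Finset.range (n + 1), U i ω) atTop (𝓝 0) := by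
  obtain ⟨M, hM⟩ := hsup
  have hD : ∀ᵐ ω ∂μ, ∀ k, 0 < k → Tendsto (fun n => (b n)⁻¹ * ∑ i ∈ range (n + 1),
      (U i ω - laggedCondExp μ 𝓕 U k i ω)) atTop (𝓝 0) :=
    ae_all_iff.2 fun k => eventually_imp_distrib_left.2 fun hk =>
      ae_tendsto_inv_mul_sum_range_sub_laggedCondExp hadapted.stronglyAdapted hL2 hbpos hbmono
        hbtop hsum hk
  have hC : ∀ᵐ ω ∂μ, ∀ k, N0 ≤ k → ∀ i, k < i →
      |laggedCondExp μ 𝓕 U k i ω| ≤ f k * ∫ x, |U i x| ∂μ :=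
    ae_all_iff.2 fun k => eventually_imp_distrib_left.2 fun hk => ae_all_iff.2 fun i =>
      eventually_imp_distrib_left.2 fun hki => ae_abs_laggedCondExp_le (hmean i) hmix hk hki
  filter_upwards [hD, hC] with ω hDω hCω
  refine tendsto_nhds_zero_of_forall_abs_le_add (by simpa using hftend.mul_const M) (K := N0 + 1)
    fun k hk => ⟨_, ?_, abs_inv_mul_sum_range_le hbpos (hf0 k (by omega))
      (fun i => integral_nonneg fun x => abs_nonneg (U i x)) hM
      (fun i hi => by rw [laggedCondExp_of_le hi]) (hCω k (by omega))⟩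
  simpa using (hDω k (by omega)).abs.add (hbtop.inv_tendsto_atTop.mul_const _)
end

section
/- Let K and K' be positive real constants and let {ξ_n}_{n≥0} be a real-valued process adapted to a filtration {𝓕_n}_{n≥0} on a probability space, with ξ_0 integrable, such that almost surely for every n: E(ξ_{n+1} | 𝓕_n) ≥ ξ_n + K and |ξ_{n+1} − ξ_n| ≤ K'. Then liminf_{n→∞} ξ_n/n ≥ K almost surely. -/
/-!
Write `ξ = M + A` (Doob decomposition). The predictable part
`A n = ∑ i < n, E[ξ (i+1) - ξ i | 𝓕 i]` is at least `n * K`, and the martingale part `M` has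
increments bounded by `2 * K'`. Martingale increments are orthogonal, so
`E[(M n - M 0)^2] ≤ (2 * K')^2 * n`; hence `∑ k, E[((M (k^2) - M 0) / k^2)^2] < ∞` and
`M (k^2) / k^2 → 0` almost surely. Bounded increments control `M` between consecutive squares, so
`M n / n → 0`, and `ξ n / n ≥ M n / n + K` gives the bound on the liminf.
-/

open MeasureTheory Filter Topology Finset
open scoped ENNReal

theorem abs_sub_le_mul_of_abs_succ_sub_le {s : ℕ → ℝ} {R : ℝ} (hs : ∀ i, |s (i + 1) - s i| ≤ R)
    {m n : ℕ} (hmn : m ≤ n) : |s n - s m| ≤ R * (n - m) := by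
  have := dist_le_Ico_sum_of_dist_le (f := s) hmn (d := fun _ => R) fun _ _ => by
    rw [dist_comm, Real.dist_eq]; exact hs _
  simpa [Real.dist_eq, abs_sub_comm, Nat.cast_sub hmn, mul_comm] using this

theorem Nat.tendsto_sqrt_atTop : Tendsto Nat.sqrt atTop atTop :=
  tendsto_atTop_atTop_of_monotone (fun _ _ => Nat.sqrt_le_sqrt) fun b => ⟨b * b, (Nat.sqrt_eq b).ge⟩

theorem tendsto_div_of_tendsto_sq_div {s : ℕ → ℝ} {R : ℝ} (hs : ∀ i, |s (i + 1) - s i| ≤ R)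
    (hsq : Tendsto (fun k : ℕ => s (k ^ 2) / (k : ℝ) ^ 2) atTop (𝓝 0)) :
    Tendsto (fun n : ℕ => s n / n) atTop (𝓝 0) := by
  have hbound : ∀ n : ℕ, 0 < n →
      ‖s n / n‖ ≤ |s (n.sqrt ^ 2) / (n.sqrt : ℝ) ^ 2| + 2 * R / n.sqrt := by
    intro n hn
    set r := n.sqrt
    have hr : (0 : ℝ) < r := by exact_mod_cast Nat.sqrt_pos.2 hn
    have hrn : (r : ℝ) ^ 2 ≤ n := by exact_mod_cast Nat.sqrt_le' n
    have hnr : (n : ℝ) ≤ r ^ 2 + 2 * r := by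
      have : (n : ℝ) ≤ r * r + r + r := by exact_mod_cast Nat.sqrt_le_add n
      nlinarith
    have hR : 0 ≤ R := (abs_nonneg _).trans (hs 0)
    have hstep := abs_sub_le_mul_of_abs_succ_sub_le hs (Nat.sqrt_le' n)
    push_cast at hstep
    have hsn : |s n| ≤ |s (r ^ 2)| + 2 * R * r := by
      have := abs_sub_abs_le_abs_sub (s n) (s (r ^ 2))
      nlinarith
    rw [Real.norm_eq_abs, abs_div, abs_div, abs_pow, Nat.abs_cast, Nat.abs_cast,
      div_le_iff₀ (by positivity)]
    calc |s n| ≤ |s (r ^ 2)| + 2 * R * r := hsn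
      _ ≤ |s (r ^ 2)| * n / r ^ 2 + 2 * R * n / r := by
        gcongr
        · rw [le_div_iff₀ (by positivity)]
          exact mul_le_mul_of_nonneg_left hrn (abs_nonneg _)
        · rw [le_div_iff₀ hr]
          nlinarith
      _ = (|s (r ^ 2)| / r ^ 2 + 2 * R / r) * n := by ring
  have hlim : Tendsto (fun k : ℕ => |s (k ^ 2) / (k : ℝ) ^ 2| + 2 * R / k) atTop (𝓝 0) := by
    simpa using hsq.abs.add (tendsto_const_div_atTop_nhds_zero_nat (2 * R))
  exact squeeze_zero_norm' ((eventually_gt_atTop 0).mono hbound) (hlim.comp Nat.tendsto_sqrt_atTop)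

theorem EReal.le_liminf_coe_of_tendsto {a b : ℕ → ℝ} {K : ℝ} (ha : Tendsto a atTop (𝓝 K))
    (hab : ∀ᶠ n in atTop, a n ≤ b n) : (K : EReal) ≤ liminf (fun n => (b n : EReal)) atTop :=
  ((continuous_coe_real_ereal.tendsto K).comp ha).liminf_eq.symm.trans_le
    (liminf_le_liminf (hab.mono fun _ h => EReal.coe_le_coe h))

namespace MeasureTheory

variable {Ω : Type*} {m0 : MeasurableSpace Ω} {μ : Measure Ω}

theorem ae_tendsto_zero_of_summable_integral_sq {Y : ℕ → Ω → ℝ} (hY : ∀ k, MemLp (Y k) 2 μ)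
    (hsum : Summable fun k => ∫ ω, Y k ω ^ 2 ∂μ) :
    ∀ᵐ ω ∂μ, Tendsto (fun k => Y k ω) atTop (𝓝 0) := by
  have hnorm : ∀ k, eLpNorm (fun ω => Y k ω ^ 2) 1 μ = ENNReal.ofReal (∫ ω, Y k ω ^ 2 ∂μ) := by
    intro k
    simp_rw [eLpNorm_one_eq_lintegral_enorm, ← ofReal_integral_norm_eq_lintegral_enorm
      (hY k).integrable_sq, Real.norm_eq_abs, abs_pow, sq_abs]
  have hfin : ∑' k, eLpNorm (fun ω => Y k ω ^ 2) 1 μ ≠ ∞ := by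
    simp_rw [hnorm, ← ENNReal.ofReal_tsum_of_nonneg (fun k => integral_nonneg fun ω => sq_nonneg _)
      hsum]
    exact ENNReal.ofReal_ne_top
  filter_upwards [summable_norm_of_tsum_eLpNorm_ne_top le_rfl
    (fun k => (hY k).integrable_sq.aestronglyMeasurable) hfin] with ω hω
  have := hω.tendsto_atTop_zero.sqrt
  simp_rw [Real.norm_eq_abs, abs_pow, Real.sqrt_sq (abs_nonneg _), Real.sqrt_zero] at this
  exact tendsto_zero_iff_abs_tendsto_zero _ |>.2 this

theorem Martingale.integral_mul_sub_eq_zero {ι : Type*} [Preorder ι] [IsFiniteMeasure μ]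
    {ℱ : Filtration ι m0} {f : ι → Ω → ℝ} (hf : Martingale f ℱ μ) {i j : ι} (hij : i ≤ j)
    {g : Ω → ℝ} (hg : StronglyMeasurable[ℱ i] g) (hgf : Integrable (g * (f j - f i)) μ) :
    ∫ ω, g ω * (f j ω - f i ω) ∂μ = 0 := by
  have hcond : μ[f j - f i | ℱ i] =ᵐ[μ] 0 := by
    filter_upwards [condExp_sub (hf.integrable j) (hf.integrable i) (ℱ i), hf.condExp_ae_eq hij]
      with ω h1 h2
    rw [h1, Pi.sub_apply, h2, condExp_of_stronglyMeasurable (ℱ.le i) (hf.stronglyMeasurable i)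
      (hf.integrable i), sub_self, Pi.zero_apply]
  calc ∫ ω, g ω * (f j ω - f i ω) ∂μ = ∫ ω, (μ[g * (f j - f i) | ℱ i]) ω ∂μ :=
        (integral_condExp (ℱ.le i)).symm
    _ = ∫ _, (0 : ℝ) ∂μ := by
        refine integral_congr_ae ?_
        filter_upwards [condExp_mul_of_stronglyMeasurable_left hg hgf
          ((hf.integrable j).sub (hf.integrable i)), hcond] with ω h1 h2
        rw [h1, Pi.mul_apply, h2, Pi.zero_apply, mul_zero]
    _ = 0 := integral_zero _ _

theorem memLp_sub_of_abs_succ_sub_le [IsFiniteMeasure μ] {f : ℕ → Ω → ℝ} {R : ℝ}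
    (hf : ∀ n, AEStronglyMeasurable (f n) μ) (hbdd : ∀ᵐ ω ∂μ, ∀ i, |f (i + 1) ω - f i ω| ≤ R)
    (p : ℝ≥0∞) {m n : ℕ} (hmn : m ≤ n) : MemLp (f n - f m) p μ := by
  refine MemLp.of_bound ((hf n).sub (hf m)) (R * (n - m)) ?_
  filter_upwards [hbdd] with ω hω
  exact abs_sub_le_mul_of_abs_succ_sub_le (s := fun i => f i ω) hω hmn

variable {ℱ : Filtration ℕ m0} {f : ℕ → Ω → ℝ} {R : ℝ}

theorem Martingale.integral_sq_sub_le [IsProbabilityMeasure μ] (hf : Martingale f ℱ μ)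
    (hbdd : ∀ᵐ ω ∂μ, ∀ i, |f (i + 1) ω - f i ω| ≤ R) (n : ℕ) :
    ∫ ω, (f n ω - f 0 ω) ^ 2 ∂μ ≤ R ^ 2 * n := by
  have hmeas n : AEStronglyMeasurable (f n) μ := (hf.integrable n).aestronglyMeasurable
  induction n with
  | zero => simp
  | succ n ih =>
    have hS := memLp_sub_of_abs_succ_sub_le hmeas hbdd 2 (Nat.zero_le n)
    have hD := memLp_sub_of_abs_succ_sub_le hmeas hbdd 2 (Nat.le_succ n)
    have hS2 : Integrable (fun ω => (f n ω - f 0 ω) ^ 2) μ := hS.integrable_sq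
    have hSD : Integrable (fun ω => (f n ω - f 0 ω) * (f (n + 1) ω - f n ω)) μ :=
      hS.integrable_mul hD
    have hcross : ∫ ω, (f n ω - f 0 ω) * (f (n + 1) ω - f n ω) ∂μ = 0 :=
      hf.integral_mul_sub_eq_zero (Nat.le_succ n)
        ((hf.stronglyMeasurable n).sub ((hf.stronglyMeasurable 0).mono (ℱ.mono (Nat.zero_le n))))
        hSD
    have hD2 : ∫ ω, (f (n + 1) ω - f n ω) ^ 2 ∂μ ≤ R ^ 2 := by
      refine (integral_mono_ae hD.integrable_sq (integrable_const (R ^ 2)) ?_).trans_eq (by simp)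
      filter_upwards [hbdd] with ω hω
      exact sq_le_sq' (abs_le.1 (hω n)).1 (abs_le.1 (hω n)).2
    calc ∫ ω, (f (n + 1) ω - f 0 ω) ^ 2 ∂μ
        = ∫ ω, ((f n ω - f 0 ω) ^ 2 + 2 * ((f n ω - f 0 ω) * (f (n + 1) ω - f n ω))
            + (f (n + 1) ω - f n ω) ^ 2) ∂μ := by congr 1; ext ω; ring
      _ = ∫ ω, (f n ω - f 0 ω) ^ 2 ∂μ + 2 * ∫ ω, (f n ω - f 0 ω) * (f (n + 1) ω - f n ω) ∂μ
            + ∫ ω, (f (n + 1) ω - f n ω) ^ 2 ∂μ := by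
        have hsum : Integrable (fun ω => (f n ω - f 0 ω) ^ 2
            + 2 * ((f n ω - f 0 ω) * (f (n + 1) ω - f n ω))) μ := hS2.add (hSD.const_mul 2)
        have hD2i : Integrable (fun ω => (f (n + 1) ω - f n ω) ^ 2) μ := hD.integrable_sq
        rw [integral_add hsum hD2i, integral_add hS2 (hSD.const_mul 2), integral_const_mul]
      _ ≤ R ^ 2 * n + R ^ 2 := by rw [hcross]; linarith
      _ = R ^ 2 * (n + 1 : ℕ) := by push_cast; ring

theorem Martingale.ae_tendsto_div_atTop [IsProbabilityMeasure μ] (hf : Martingale f ℱ μ)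
    (hbdd : ∀ᵐ ω ∂μ, ∀ i, |f (i + 1) ω - f i ω| ≤ R) :
    ∀ᵐ ω ∂μ, Tendsto (fun n : ℕ => f n ω / n) atTop (𝓝 0) := by
  have hmeas n : AEStronglyMeasurable (f n) μ := (hf.integrable n).aestronglyMeasurable
  have hsq_bound (k : ℕ) :
      ∫ ω, ((f (k ^ 2) ω - f 0 ω) / (k : ℝ) ^ 2) ^ 2 ∂μ ≤ R ^ 2 * (1 / (k : ℝ) ^ 2) := by
    simp_rw [div_pow, integral_div]
    rcases Nat.eq_zero_or_pos k with rfl | hk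
    · simp
    calc (∫ ω, (f (k ^ 2) ω - f 0 ω) ^ 2 ∂μ) / ((k : ℝ) ^ 2) ^ 2
        ≤ R ^ 2 * (k ^ 2 : ℕ) / ((k : ℝ) ^ 2) ^ 2 := by gcongr; exact hf.integral_sq_sub_le hbdd _
      _ = R ^ 2 * (1 / (k : ℝ) ^ 2) := by field_simp; push_cast; ring
  have hsub : ∀ᵐ ω ∂μ, Tendsto (fun k : ℕ => (f (k ^ 2) ω - f 0 ω) / (k : ℝ) ^ 2) atTop (𝓝 0) :=
    ae_tendsto_zero_of_summable_integral_sq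
      (fun k => by
        simpa [div_eq_mul_inv] using (memLp_sub_of_abs_succ_sub_le hmeas hbdd 2
          (Nat.zero_le (k ^ 2))).mul_const ((k : ℝ) ^ 2)⁻¹)
      (Summable.of_nonneg_of_le (fun k => integral_nonneg fun ω => sq_nonneg _) hsq_bound
        ((Real.summable_one_div_nat_pow.2 one_lt_two).mul_left _))
  filter_upwards [hsub, hbdd] with ω hω hωbdd
  have hcentered := tendsto_div_of_tendsto_sq_div (s := fun n => f n ω - f 0 ω)
    (by simpa using hωbdd) hω
  simpa [sub_div] using hcentered.add (tendsto_const_div_atTop_nhds_zero_nat (f 0 ω))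

theorem natCast_mul_le_predictablePart [IsFiniteMeasure μ] {K : ℝ} (hf : StronglyAdapted ℱ f)
    (hint : ∀ n, Integrable (f n) μ) (hdrift : ∀ n, ∀ᵐ ω ∂μ, f n ω + K ≤ μ[f (n + 1) | ℱ n] ω) :
    ∀ᵐ ω ∂μ, ∀ n : ℕ, n * K ≤ predictablePart f ℱ μ n ω := by
  have hinc : ∀ᵐ ω ∂μ, ∀ i, K ≤ μ[f (i + 1) - f i | ℱ i] ω := by
    refine ae_all_iff.2 fun i => ?_
    filter_upwards [condExp_sub (hint (i + 1)) (hint i) (ℱ i), hdrift i] with ω hsub hω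
    rw [hsub, Pi.sub_apply, condExp_of_stronglyMeasurable (ℱ.le i) (hf i) (hint i)]
    linarith
  filter_upwards [hinc] with ω hω n
  simpa [predictablePart, Finset.sum_apply] using
    Finset.card_nsmul_le_sum (range n) (fun i => μ[f (i + 1) - f i | ℱ i] ω) K fun i _ => hω i

end MeasureTheory

theorem liminf_div_ge_drift_general {Ω : Type*} {m : MeasurableSpace Ω}
    (μ : Measure Ω) [IsProbabilityMeasure μ]
    (𝓕 : Filtration ℕ m) (ξ : ℕ → Ω → ℝ) (K K' : ℝ)
    (hadapted : Adapted 𝓕 ξ) (hint : Integrable (ξ 0) μ)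
    (hdrift : ∀ n : ℕ, ∀ᵐ ω ∂μ,
      ξ n ω + K ≤ (μ[ξ (n + 1) | 𝓕 n]) ω ∧ |ξ (n + 1) ω - ξ n ω| ≤ K') :
    ∀ᵐ ω ∂μ, ((K : ℝ) : EReal) ≤
      Filter.liminf (fun n : ℕ => ((ξ n ω / n : ℝ) : EReal)) atTop := by
  have hξ : StronglyAdapted 𝓕 ξ := hadapted.stronglyAdapted
  have hbdd : ∀ᵐ ω ∂μ, ∀ i, |ξ (i + 1) ω - ξ i ω| ≤ K' :=
    ae_all_iff.2 fun i => (hdrift i).mono fun _ h => h.2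
  have hint_n (n : ℕ) : Integrable (ξ n) μ := by
    simpa using ((memLp_sub_of_abs_succ_sub_le
      (fun n => ((hξ n).mono (𝓕.le n)).aestronglyMeasurable) hbdd 1 (Nat.zero_le n)).integrable
        le_rfl).add hint
  have hM := (martingale_martingalePart hξ hint_n).ae_tendsto_div_atTop
    (by simpa using martingalePart_bdd_difference 𝓕 (μ := μ) (f := ξ) (by simpa using hbdd))
  have hA := natCast_mul_le_predictablePart hξ hint_n fun n => (hdrift n).mono fun _ h => h.1
  filter_upwards [hM, hA] with ω hMω hAω
  refine EReal.le_liminf_coe_of_tendsto (by simpa using hMω.add_const K) ?_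
  filter_upwards [eventually_gt_atTop 0] with n hn
  have hAn : K ≤ predictablePart ξ 𝓕 μ n ω / n := by
    rw [le_div_iff₀ (by positivity), mul_comm]
    exact hAω n
  have hξn : ξ n ω = martingalePart ξ 𝓕 μ n ω + predictablePart ξ 𝓕 μ n ω :=
    (congrFun (congrFun (martingalePart_add_predictablePart 𝓕 μ ξ) n) ω).symm
  rw [hξn, add_div]
  linarith

/-- a process with uniformly positive drift `K` and bounded increments
satisfies `liminf ξ_n / n ≥ K` almost surely. -/
theorem liminf_div_ge_drift {Ω : Type*} {m : MeasurableSpace Ω}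
    (μ : Measure Ω) [IsProbabilityMeasure μ]
    (𝓕 : Filtration ℕ m) (ξ : ℕ → Ω → ℝ) (K K' : ℝ) (hK : 0 < K) (hK' : 0 < K')
    (hadapted : Adapted 𝓕 ξ) (hint : Integrable (ξ 0) μ)
    (hdrift : ∀ n : ℕ, ∀ᵐ ω ∂μ,
      ξ n ω + K ≤ (μ[ξ (n + 1) | 𝓕 n]) ω ∧ |ξ (n + 1) ω - ξ n ω| ≤ K') :
    ∀ᵐ ω ∂μ, ((K : ℝ) : EReal) ≤
      Filter.liminf (fun n : ℕ => ((ξ n ω / n : ℝ) : EReal)) atTop :=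
  liminf_div_ge_drift_general μ 𝓕 ξ K K' hadapted hint hdrift
end

section
/- Let 𝒴 be a finite nonempty set, let p : 𝒴 → ℝ be a probability mass function on 𝒴 (p(y) ≥ 0 and Σ_y p(y) = 1), let f : 𝒴 → ℝ satisfy 0 < f(y) < 1 for all y, and let η ∈ (0,1) satisfy Σ_y p(y)·f(y) = η. Then Σ_y p(y)·[ln(1 − f(y)) − ln(−ln f(y))] ≤ ln(1 − η) − ln(−ln η). -/
open Real intervalIntegral

set_option maxHeartbeats 1000000

/-- `∫ x in 0..1, t ^ x = (t - 1) / log t` for `0 < t < 1`. -/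
lemma integral_rpow_aux {t : ℝ} (ht0 : 0 < t) (ht1 : t < 1) :
    ∫ x in (0:ℝ)..1, t ^ x = (t - 1) / Real.log t := by
  have hlt : Real.log t ≠ 0 := ne_of_lt (Real.log_neg ht0 ht1)
  have h1 : ∀ x : ℝ, t ^ x = Real.exp (Real.log t * x) := by
    intro x
    rw [Real.rpow_def_of_pos ht0, mul_comm]
  simp only [h1]
  rw [intervalIntegral.integral_comp_mul_left Real.exp hlt]
  simp [integral_exp, smul_eq_mul]
  rw [Real.exp_log ht0]
  field_simp

/-- Jensen-type inequality from the concavity of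
`t ↦ ln(1 − t) − ln(−ln t)` on `(0,1)`. -/
theorem jensen_log_one_sub_log_neg_log {𝒴 : Type*} [Fintype 𝒴] [Nonempty 𝒴]
    (p : 𝒴 → ℝ) (hp : ∀ y, 0 ≤ p y) (hpsum : ∑ y, p y = 1)
    (f : 𝒴 → ℝ) (hf : ∀ y, 0 < f y ∧ f y < 1)
    (η : ℝ) (hη : 0 < η ∧ η < 1)
    (hmean : ∑ y, p y * f y = η) :
    ∑ y, p y * (Real.log (1 - f y) - Real.log (-Real.log (f y))) ≤
      Real.log (1 - η) - Real.log (-Real.log η) := by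
  obtain ⟨hη0, hη1⟩ := hη
  set H : ℝ → ℝ := fun t => (1 - t) / (-Real.log t) with hH
  -- H t > 0 for t ∈ (0,1)
  have hHpos : ∀ t : ℝ, 0 < t → t < 1 → 0 < H t := by
    intro t h0 h1
    exact div_pos (by linarith) (by simpa using neg_pos.mpr (Real.log_neg h0 h1))
  -- H t = ∫ x in 0..1, t ^ x
  have hHint : ∀ t : ℝ, 0 < t → t < 1 → H t = ∫ x in (0:ℝ)..1, t ^ x := by
    intro t h0 h1
    rw [integral_rpow_aux h0 h1, hH]
    simp only [div_neg]
    ring_nf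
  -- log (H t) = log (1 - t) - log (-log t)
  have hlogH : ∀ t : ℝ, 0 < t → t < 1 →
      Real.log (1 - t) - Real.log (-Real.log t) = Real.log (H t) := by
    intro t h0 h1
    rw [hH, Real.log_div (by linarith) (by simpa using (Real.log_neg h0 h1).ne)]
  -- Step 1: pointwise Jensen for rpow, each x ∈ [0,1]
  have step1 : ∀ x ∈ Set.Icc (0:ℝ) 1, ∑ y, p y * f y ^ x ≤ η ^ x := by
    intro x hx
    have := (Real.concaveOn_rpow hx.1 hx.2).le_map_sum
      (t := Finset.univ) (w := p) (p := f) (fun y _ => hp y) hpsum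
      (fun y _ => Set.mem_Ici.mpr (hf y).1.le)
    simpa [smul_eq_mul, hmean] using this
  -- Step 2: integrate to get ∑ p y * H (f y) ≤ H η
  have step2 : ∑ y, p y * H (f y) ≤ H η := by
    have hint : ∀ t : ℝ, 0 < t → IntervalIntegrable (fun x : ℝ => t ^ x)
        MeasureTheory.volume 0 1 := by
      intro t ht
      have heq : (fun x : ℝ => t ^ x) = fun x : ℝ => Real.exp (Real.log t * x) := by
        funext x; rw [Real.rpow_def_of_pos ht, mul_comm]
      rw [heq]
      exact (Real.continuous_exp.comp (continuous_const.mul continuous_id)).intervalIntegrable 0 1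
    calc ∑ y, p y * H (f y)
        = ∫ x in (0:ℝ)..1, ∑ y, p y * f y ^ x := by
          rw [intervalIntegral.integral_finset_sum]
          · refine Finset.sum_congr rfl fun y _ => ?_
            rw [hHint (f y) (hf y).1 (hf y).2, intervalIntegral.integral_const_mul]
          · intro y _
            exact (hint (f y) (hf y).1).const_mul _
      _ ≤ ∫ x in (0:ℝ)..1, η ^ x := by
          have h1 := IntervalIntegrable.sum (μ := MeasureTheory.volume) (a := 0) (b := 1)
            (f := fun y => fun x : ℝ => p y * f y ^ x) Finset.univ
            (fun y _ => (hint (f y) (hf y).1).const_mul _)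
          rw [Finset.sum_fn] at h1
          exact intervalIntegral.integral_mono_on zero_le_one h1 (hint η hη0) step1
      _ = H η := (hHint η hη0 hη1).symm
  -- Step 3: tangent line of log
  have hHη : 0 < H η := hHpos η hη0 hη1
  have step3 : ∀ y, p y * Real.log (H (f y)) ≤
      p y * (Real.log (H η) + (H (f y) - H η) / H η) := by
    intro y
    apply mul_le_mul_of_nonneg_left _ (hp y)
    have hHf : 0 < H (f y) := hHpos _ (hf y).1 (hf y).2
    have h0 := Real.log_le_sub_one_of_pos (div_pos hHf hHη)
    rw [Real.log_div hHf.ne' hHη.ne'] at h0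
    have h2 : H (f y) / H η - 1 = (H (f y) - H η) / H η := by field_simp
    linarith
  calc ∑ y, p y * (Real.log (1 - f y) - Real.log (-Real.log (f y)))
      = ∑ y, p y * Real.log (H (f y)) := by
        refine Finset.sum_congr rfl fun y _ => ?_
        rw [hlogH (f y) (hf y).1 (hf y).2]
    _ ≤ ∑ y, p y * (Real.log (H η) + (H (f y) - H η) / H η) :=
        Finset.sum_le_sum fun y _ => step3 y
    _ ≤ Real.log (1 - η) - Real.log (-Real.log η) := by
        rw [hlogH η hη0 hη1]
        simp only [mul_add, Finset.sum_add_distrib]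
        have e1 : ∑ y, p y * Real.log (H η) = Real.log (H η) := by
          rw [← Finset.sum_mul, hpsum, one_mul]
        have e2 : ∑ y, p y * ((H (f y) - H η) / H η)
            = ((∑ y, p y * H (f y)) - H η) / H η := by
          rw [eq_div_iff hHη.ne', Finset.sum_mul]
          have hcong : ∀ y ∈ (Finset.univ : Finset 𝒴),
              p y * ((H (f y) - H η) / H η) * H η = p y * H (f y) - p y * H η :=
            fun y _ => by field_simp
          rw [Finset.sum_congr rfl hcong, Finset.sum_sub_distrib, ← Finset.sum_mul,
            hpsum, one_mul]
        rw [e1, e2]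
        have hle : ((∑ y, p y * H (f y)) - H η) / H η ≤ 0 :=
          div_nonpos_of_nonpos_of_nonneg (by linarith [step2]) hHη.le
        linarith
end

section
/- Let 𝒴 be a finite nonempty set, let P, Q : 𝒴 → ℝ be probability mass functions on 𝒴 with P(y) > 0 and Q(y) > 0 for all y ∈ 𝒴, let η ∈ [0,1], and define p(y) = η·P(y) + (1 − η)·Q(y) for each y. Then Σ_{y∈𝒴} p(y)·ln( p(y)² / (P(y)·Q(y)) ) ≤ η·D(P‖Q) + (1 − η)·D(Q‖P), where D(P‖Q) = Σ_{y∈𝒴} P(y)·ln(P(y)/Q(y)) is the relative entropy between P and Q. -/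
lemma mul_log_div_convex_aux (a b c η : ℝ) (ha : 0 < a) (hb : 0 < b) (hc : 0 < c)
    (h0 : 0 ≤ η) (h1 : η ≤ 1) :
    (η * a + (1 - η) * b) * Real.log ((η * a + (1 - η) * b) / c) ≤
      η * (a * Real.log (a / c)) + (1 - η) * (b * Real.log (b / c)) := by
  have hlin : ConvexOn ℝ (Set.Ici (0 : ℝ)) (fun t : ℝ => t * (-Real.log c)) := by
    refine ⟨convex_Ici 0, ?_⟩
    intro x _ y _ a b _ _ _
    simp only [smul_eq_mul]
    apply le_of_eq; ring
  have hconv : ConvexOn ℝ (Set.Ici (0 : ℝ)) (fun t => t * Real.log t + t * (-Real.log c)) :=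
    Real.convexOn_mul_log.add hlin
  have key := hconv.2 (Set.mem_Ici.mpr ha.le) (Set.mem_Ici.mpr hb.le) h0
    (sub_nonneg.mpr h1) (by ring)
  simp only [smul_eq_mul] at key
  have hm : 0 < η * a + (1 - η) * b := by
    rcases eq_or_lt_of_le h0 with h | h
    · simp [← h]; nlinarith
    · nlinarith
  have e1 : Real.log ((η * a + (1 - η) * b) / c) = Real.log (η * a + (1 - η) * b) - Real.log c :=
    Real.log_div hm.ne' hc.ne'
  have e2 : Real.log (a / c) = Real.log a - Real.log c := Real.log_div ha.ne' hc.ne'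
  have e3 : Real.log (b / c) = Real.log b - Real.log c := Real.log_div hb.ne' hc.ne'
  rw [e1, e2, e3]
  nlinarith [key]

/-- for the mixture `p = η P + (1 − η) Q` of two strictly positive
probability mass functions on a finite set,
`Σ p(y) ln(p(y)²/(P(y)Q(y))) ≤ η D(P‖Q) + (1 − η) D(Q‖P)`. -/
theorem mixture_log_ratio_le_convex_combination_kl {𝒴 : Type*} [Fintype 𝒴] [Nonempty 𝒴]
    (P Q : 𝒴 → ℝ)
    (hP : ∀ y, 0 < P y) (hQ : ∀ y, 0 < Q y)
    (hPsum : ∑ y, P y = 1) (hQsum : ∑ y, Q y = 1)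
    (η : ℝ) (hη : η ∈ Set.Icc (0 : ℝ) 1)
    (p : 𝒴 → ℝ) (hp : ∀ y, p y = η * P y + (1 - η) * Q y) :
    ∑ y, p y * Real.log ((p y) ^ 2 / (P y * Q y)) ≤
      η * (∑ y, P y * Real.log (P y / Q y)) +
        (1 - η) * (∑ y, Q y * Real.log (Q y / P y)) := by
  obtain ⟨h0, h1⟩ := hη
  have hppos : ∀ y, 0 < p y := by
    intro y; rw [hp y]
    rcases eq_or_lt_of_le h0 with h | h
    · have := hQ y; simp [← h]; nlinarith
    · nlinarith [hP y, hQ y]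
  rw [Finset.mul_sum, Finset.mul_sum, ← Finset.sum_add_distrib]
  apply Finset.sum_le_sum
  intro y _
  have hPy := hP y; have hQy := hQ y; have hpy := hppos y
  have split : p y * Real.log ((p y) ^ 2 / (P y * Q y)) =
      p y * Real.log (p y / P y) + p y * Real.log (p y / Q y) := by
    rw [Real.log_div (pow_ne_zero 2 hpy.ne') (by positivity),
      Real.log_div hpy.ne' hPy.ne', Real.log_div hpy.ne' hQy.ne',
      Real.log_mul hPy.ne' hQy.ne', Real.log_pow]
    push_cast; ring
  rw [split]
  have h1' := mul_log_div_convex_aux (P y) (Q y) (Q y) η hPy hQy hQy h0 h1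
  have h2' := mul_log_div_convex_aux (P y) (Q y) (P y) η hPy hQy hPy h0 h1
  rw [← hp y] at h1' h2'
  have hz1 : Real.log (Q y / Q y) = 0 := by rw [div_self hQy.ne']; exact Real.log_one
  have hz2 : Real.log (P y / P y) = 0 := by rw [div_self hPy.ne']; exact Real.log_one
  rw [hz1] at h1'; rw [hz2] at h2'
  nlinarith [h1', h2']
end

section
/- Let B, C be positive real constants. Let {ρ_N}_{N∈ℕ} be a sequence of positive real numbers with ρ_N → 0 and ρ_N·√N → ∞ as N → ∞, and let {φ_N}_{N∈ℕ} be a sequence of real numbers in the open interval (0,1) such that α := liminf_{N→∞} (−ln φ_N)/(N·ρ_N) > 0. Suppose there exist a constant K ∈ ℝ and N₀ ∈ ℕ such that for all N ≥ N₀: −ln(φ_N)/(N·ρ_N) − ln(N·C − N·ρ_N − ln φ_N)/(N·ρ_N) ≤ B/(C·N·ρ_N) + B·φ_N/ρ_N − B·φ_N/C + B/C + K/(N·ρ_N). Then limsup_{N→∞} (−ln φ_N)/(N·ρ_N) ≤ B/C. -/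
/-!
Write `x_N = N ρ_N` and `λ_N = -ln φ_N`. The elementary bound `ln y ≤ ln t + y/t - 1` at
`t = NC` gives `ln (NC - Nρ_N + λ_N) ≤ ln (NC) + λ_N/(NC)`, so the logarithm on the left of the
hypothesis is absorbed: `(λ_N/x_N) (1 - 1/(NC)) ≤ ln (NC)/x_N + R_N`, with `R_N` the right-hand
side. Since `x_N ≥ √N` eventually, `ln (NC)/x_N → 0`. A positive liminf gives
`φ_N ≤ exp (-r x_N)` for some `r > 0`, which beats `1/ρ_N ≤ √N`; hence `φ_N/ρ_N → 0` and
`R_N → B/C`.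
-/

open Filter Real
open scoped Topology

lemma log_le_log_add_div_sub_one {y t : ℝ} (hy : 0 < y) (ht : 0 < t) :
    log y ≤ log t + y / t - 1 := by
  have := log_le_sub_one_of_pos (div_pos hy ht)
  rw [log_div hy.ne' ht.ne'] at this
  linarith

lemma tendsto_log_div_sqrt_atTop : Tendsto (fun y => log y / √y) atTop (𝓝 0) := by
  simpa only [sqrt_eq_rpow] using (isLittleO_log_rpow_atTop one_half_pos).tendsto_div_nhds_zero

lemma neg_div_le_of_sub_log_div_le {N C ρ l R : ℝ} (hNC : 1 < N * C) (hρ : 0 < ρ) (hρC : ρ ≤ C)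
    (hl : l < 0) (h : -l / (N * ρ) - log (N * C - N * ρ - l) / (N * ρ) ≤ R) :
    -l / (N * ρ) ≤ (log (N * C) / (N * ρ) + R) / (1 - 1 / (N * C)) := by
  have hC : 0 < C := hρ.trans_le hρC
  have hN : 0 < N := pos_of_mul_pos_left (one_pos.trans hNC) hC.le
  have hx : 0 < N * ρ := mul_pos hN hρ
  have hy : 0 < N * C - N * ρ - l := by nlinarith
  have hlog : log (N * C - N * ρ - l) ≤ log (N * C) - l / (N * C) :=
    calc log (N * C - N * ρ - l) ≤ log (N * C) + (N * C - N * ρ - l) / (N * C) - 1 :=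
          log_le_log_add_div_sub_one hy (one_pos.trans hNC)
      _ = log (N * C) - l / (N * C) - ρ / C := by field_simp; ring
      _ ≤ log (N * C) - l / (N * C) := sub_le_self _ (by positivity)
  rw [← sub_div, div_le_iff₀ hx] at h
  have hkey : -l * (1 - 1 / (N * C)) ≤ log (N * C) + R * (N * ρ) := by
    linear_combination h + hlog
  rw [le_div_iff₀ (sub_pos.2 ((div_lt_one (one_pos.trans hNC)).2 hNC))]
  calc -l / (N * ρ) * (1 - 1 / (N * C)) = -l * (1 - 1 / (N * C)) / (N * ρ) := by ring
    _ ≤ (log (N * C) + R * (N * ρ)) / (N * ρ) := by gcongr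
    _ = log (N * C) / (N * ρ) + R := by rw [add_div, mul_div_cancel_right₀ _ hx.ne']

lemma exists_pos_eventually_lt_of_zero_lt_liminf {ι : Type*} {l : Filter ι} {a : ι → ℝ}
    (h : (0 : EReal) < liminf (fun i => (a i : EReal)) l) :
    ∃ r : ℝ, 0 < r ∧ ∀ᶠ i in l, r < a i := by
  obtain ⟨r, hr0, hr⟩ := EReal.exists_between_coe_real h
  exact ⟨r, EReal.coe_pos.1 hr0,
    (eventually_lt_of_lt_liminf hr).mono fun _ => EReal.coe_lt_coe_iff.1⟩

lemma limsup_coe_le_of_eventually_le_of_tendsto {ι : Type*} {l : Filter ι} [l.NeBot]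
    {a u : ι → ℝ} {L : ℝ} (hau : ∀ᶠ i in l, a i ≤ u i) (hu : Tendsto u l (𝓝 L)) :
    limsup (fun i => (a i : EReal)) l ≤ L :=
  calc limsup (fun i => (a i : EReal)) l ≤ limsup (fun i => (u i : EReal)) l :=
        limsup_le_limsup (hau.mono fun _ => EReal.coe_le_coe_iff.2)
    _ = L := (EReal.tendsto_coe.2 hu).limsup_eq

lemma tendsto_key_bound_rhs {B C K : ℝ} {ρ φ : ℕ → ℝ}
    (hx : Tendsto (fun N : ℕ => (N : ℝ) * ρ N) atTop atTop)
    (hφρ : Tendsto (fun N => φ N / ρ N) atTop (𝓝 0)) (hφ : Tendsto φ atTop (𝓝 0)) :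
    Tendsto (fun N : ℕ => B / (C * N * ρ N) + B * φ N / ρ N - B * φ N / C + B / C +
      K / (N * ρ N)) atTop (𝓝 (B / C)) := by
  have h := ((((tendsto_const_nhds (x := B / C)).div_atTop hx).add (hφρ.const_mul B)).sub
    (hφ.const_mul (B / C))).add_const (B / C) |>.add
    ((tendsto_const_nhds (x := K)).div_atTop hx)
  convert h using 1
  · ext N; ring
  · simp

lemma tendsto_sqrt_natCast_atTop : Tendsto (fun N : ℕ => √(N : ℝ)) atTop atTop :=
  tendsto_sqrt_atTop.comp tendsto_natCast_atTop_atTop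

section

variable {ρ : ℕ → ℝ}

lemma tendsto_natCast_mul_atTop_of_mul_sqrt
    (hρ : Tendsto (fun N : ℕ => ρ N * √(N : ℝ)) atTop atTop) :
    Tendsto (fun N : ℕ => (N : ℝ) * ρ N) atTop atTop :=
  (tendsto_sqrt_natCast_atTop.atTop_mul_atTop₀ hρ).congr fun N => by
    rw [← mul_assoc, mul_comm, ← mul_assoc, mul_self_sqrt N.cast_nonneg, mul_comm]

lemma tendsto_log_natCast_mul_div_of_mul_sqrt
    (hρ : Tendsto (fun N : ℕ => ρ N * √(N : ℝ)) atTop atTop) {C : ℝ} (hC : 0 < C) :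
    Tendsto (fun N : ℕ => log (N * C) / (N * ρ N)) atTop (𝓝 0) := by
  have hlog : Tendsto (fun N : ℕ => log (N * C) / √(N * C) * √C) atTop (𝓝 0) := by
    simpa only [Function.comp_def, zero_mul] using (tendsto_log_div_sqrt_atTop.comp
      (tendsto_natCast_atTop_atTop.atTop_mul_const hC)).mul_const √C
  refine (hlog.div_atTop hρ).congr fun N => ?_
  rw [sqrt_mul N.cast_nonneg, ← mul_div_right_comm, mul_div_mul_right _ _ (sqrt_pos.2 hC).ne',
    div_div, ← mul_assoc, mul_comm _ (ρ N), mul_assoc, mul_self_sqrt N.cast_nonneg,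
    mul_comm (ρ N)]

lemma tendsto_exp_neg_mul_natCast_mul_div_of_mul_sqrt
    (hρ : Tendsto (fun N : ℕ => ρ N * √(N : ℝ)) atTop atTop) {r : ℝ} (hr : 0 < r) :
    Tendsto (fun N : ℕ => exp (-(r * (N * ρ N))) / ρ N) atTop (𝓝 0) := by
  have hlim : Tendsto (fun N : ℕ => √(N : ℝ) * exp (-r * √(N : ℝ))) atTop (𝓝 0) := by
    simpa only [Function.comp_def, rpow_one] using
      (tendsto_rpow_mul_exp_neg_mul_atTop_nhds_zero 1 r hr).comp tendsto_sqrt_natCast_atTop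
  have hbound : ∀ᶠ N : ℕ in atTop, 0 ≤ exp (-(r * (N * ρ N))) / ρ N ∧
      exp (-(r * (N * ρ N))) / ρ N ≤ √(N : ℝ) * exp (-r * √(N : ℝ)) := by
    filter_upwards [hρ.eventually_ge_atTop 1] with N hN
    have hρN : 0 < ρ N := pos_of_mul_pos_left (one_pos.trans_le hN) (sqrt_nonneg _)
    refine ⟨by positivity, ?_⟩
    have hinv : 1 / ρ N ≤ √(N : ℝ) := by rw [div_le_iff₀ hρN]; linarith
    have hexp : exp (-(r * (N * ρ N))) ≤ exp (-r * √(N : ℝ)) := by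
      have hsqrt_le : √(N : ℝ) ≤ N * ρ N := by
        nlinarith [mul_self_sqrt (N.cast_nonneg : (0 : ℝ) ≤ N), sqrt_nonneg (N : ℝ)]
      gcongr; nlinarith
    calc exp (-(r * (N * ρ N))) / ρ N = exp (-(r * (N * ρ N))) * (1 / ρ N) := by ring
      _ ≤ exp (-r * √(N : ℝ)) * √(N : ℝ) := by gcongr
      _ = √(N : ℝ) * exp (-r * √(N : ℝ)) := mul_comm _ _
  exact squeeze_zero' (hbound.mono fun _ => And.left) (hbound.mono fun _ => And.right) hlim

lemma tendsto_div_of_lt_neg_log_div (hρ : Tendsto (fun N : ℕ => ρ N * √(N : ℝ)) atTop atTop)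
    (hρpos : ∀ N, 0 < ρ N) {φ : ℕ → ℝ} (hφ : ∀ N, 0 < φ N) {r : ℝ} (hr : 0 < r)
    (hra : ∀ᶠ N : ℕ in atTop, r < -log (φ N) / (N * ρ N)) :
    Tendsto (fun N => φ N / ρ N) atTop (𝓝 0) := by
  refine squeeze_zero' (.of_forall fun N => div_nonneg (hφ N).le (hρpos N).le) ?_
    (tendsto_exp_neg_mul_natCast_mul_div_of_mul_sqrt hρ hr)
  filter_upwards [hra, eventually_ge_atTop 1] with N h hN
  have hx : 0 < (N : ℝ) * ρ N := mul_pos (by exact_mod_cast hN) (hρpos N)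
  rw [lt_div_iff₀ hx] at h
  refine div_le_div_of_nonneg_right ?_ (hρpos N).le
  calc φ N = exp (log (φ N)) := (exp_log (hφ N)).symm
    _ ≤ exp (-(r * (N * ρ N))) := exp_le_exp.2 (by linarith)

lemma tendsto_log_div_add_div_one_sub_inv
    (hρ : Tendsto (fun N : ℕ => ρ N * √(N : ℝ)) atTop atTop)
    {C L : ℝ} (hC : 0 < C) {R : ℕ → ℝ} (hR : Tendsto R atTop (𝓝 L)) :
    Tendsto (fun N : ℕ => (log (N * C) / (N * ρ N) + R N) / (1 - 1 / (N * C))) atTop (𝓝 L) := by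
  have hden : Tendsto (fun N : ℕ => 1 - 1 / ((N : ℝ) * C)) atTop (𝓝 1) := by
    simpa using tendsto_const_nhds.sub
      ((tendsto_const_nhds (x := (1 : ℝ))).div_atTop
        (tendsto_natCast_atTop_atTop.atTop_mul_const hC))
  have h := ((tendsto_log_natCast_mul_div_of_mul_sqrt hρ hC).add hR).div hden one_ne_zero
  rwa [zero_add, div_one] at h

end

theorem moderate_deviations_converse_core_general (B C : ℝ) (hC : 0 < C)
    (ρ φ : ℕ → ℝ) (hρpos : ∀ N, 0 < ρ N)
    (hρ0 : Tendsto ρ atTop (𝓝 0))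
    (hρsqrt : Tendsto (fun N : ℕ => ρ N * Real.sqrt N) atTop atTop)
    (hφ : ∀ N, φ N ∈ Set.Ioo (0 : ℝ) 1)
    (hα : (0 : EReal) <
      Filter.liminf (fun N : ℕ => ((-Real.log (φ N) / ((N : ℝ) * ρ N) : ℝ) : EReal)) atTop)
    (K : ℝ) (N₀ : ℕ)
    (hineq : ∀ N : ℕ, N ≥ N₀ →
      -Real.log (φ N) / ((N : ℝ) * ρ N) -
        Real.log ((N : ℝ) * C - (N : ℝ) * ρ N - Real.log (φ N)) / ((N : ℝ) * ρ N) ≤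
      B / (C * (N : ℝ) * ρ N) + B * φ N / ρ N - B * φ N / C + B / C +
        K / ((N : ℝ) * ρ N)) :
    Filter.limsup (fun N : ℕ => ((-Real.log (φ N) / ((N : ℝ) * ρ N) : ℝ) : EReal)) atTop ≤
      ((B / C : ℝ) : EReal) := by
  have hx := tendsto_natCast_mul_atTop_of_mul_sqrt hρsqrt
  obtain ⟨r, hr, hra⟩ := exists_pos_eventually_lt_of_zero_lt_liminf hα
  have hφρ := tendsto_div_of_lt_neg_log_div hρsqrt hρpos (fun N => (hφ N).1) hr hra
  have hφ0 : Tendsto φ atTop (𝓝 0) := by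
    simpa using (hφρ.mul hρ0).congr fun N => div_mul_cancel₀ _ (hρpos N).ne'
  refine limsup_coe_le_of_eventually_le_of_tendsto ?_
    (tendsto_log_div_add_div_one_sub_inv hρsqrt hC (tendsto_key_bound_rhs (K := K) hx hφρ hφ0))
  filter_upwards [eventually_ge_atTop N₀,
    (tendsto_natCast_atTop_atTop.atTop_mul_const hC).eventually_gt_atTop 1,
    hρ0.eventually (eventually_le_nhds hC)] with N hN hNC hρC
  exact neg_div_le_of_sub_log_div_le hNC (hρpos N) hρC (log_neg (hφ N).1 (hφ N).2) (hineq N hN)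

/-- analytic core of the converse: given the key inequality and a strictly
positive moderate deviations liminf, the moderate deviations limsup of `φ_N` is at most
`B/C`. -/
theorem moderate_deviations_converse_core (B C : ℝ) (hB : 0 < B) (hC : 0 < C)
    (ρ φ : ℕ → ℝ) (hρpos : ∀ N, 0 < ρ N)
    (hρ0 : Tendsto ρ atTop (𝓝 0))
    (hρsqrt : Tendsto (fun N : ℕ => ρ N * Real.sqrt N) atTop atTop)
    (hφ : ∀ N, φ N ∈ Set.Ioo (0 : ℝ) 1)
    (hα : (0 : EReal) <
      Filter.liminf (fun N : ℕ => ((-Real.log (φ N) / ((N : ℝ) * ρ N) : ℝ) : EReal)) atTop)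
    (K : ℝ) (N₀ : ℕ)
    (hineq : ∀ N : ℕ, N ≥ N₀ →
      -Real.log (φ N) / ((N : ℝ) * ρ N) -
        Real.log ((N : ℝ) * C - (N : ℝ) * ρ N - Real.log (φ N)) / ((N : ℝ) * ρ N) ≤
      B / (C * (N : ℝ) * ρ N) + B * φ N / ρ N - B * φ N / C + B / C +
        K / ((N : ℝ) * ρ N)) :
    Filter.limsup (fun N : ℕ => ((-Real.log (φ N) / ((N : ℝ) * ρ N) : ℝ) : EReal)) atTop ≤
      ((B / C : ℝ) : EReal) :=
  moderate_deviations_converse_core_general B C hC ρ φ hρpos hρ0 hρsqrt hφ hα K N₀ hineq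
end
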